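/- arXiv:1804.01317 — 12 statements merged into one kernel-verified Lean document; each statement's English description precedes it below -/
import Mathlib

section
/- Let G be a graph whose edge set is partitioned into colour classes C_1,...,C_p, each of size at most k, and suppose G contains no rainbow triangle (a triangle whose three edges have three distinct colours). If G has m edges, then the number of triangles in G is at most m(k-1)/2. -/
/-- In an edge-coloured graph (colour classes = fibres of `col` on the
edge set) where every colour class has size at most `k` and there is no rainbow triangle,
the number of triangles is at most `m * (k-1) / 2`. -/
theorem stmt0 {V : Type*} [Fintype V] [DecidableEq V] (G : SimpleGraph V)
    [DecidableRel G.Adj] (k m : ℕ) (col : Sym2 V → ℕ)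
    (hm : m = G.edgeFinset.card)
    (hclass : ∀ i : ℕ, (G.edgeFinset.filter (fun e => col e = i)).card ≤ k)
    (hrb : ¬ ∃ x y z : V, G.Adj x y ∧ G.Adj y z ∧ G.Adj x z ∧
      col s(x, y) ≠ col s(y, z) ∧ col s(y, z) ≠ col s(x, z) ∧ col s(x, y) ≠ col s(x, z)) :
    2 * (G.cliqueFinset 3).card ≤ m * (k - 1) := by
  classical
  push_neg at hrb
  set S : Finset (Sym2 V × Sym2 V) :=
    (G.edgeFinset ×ˢ G.edgeFinset).filter (fun p => p.1 ≠ p.2 ∧ col p.1 = col p.2) with hS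
  have hScard : S.card ≤ m * (k - 1) := by
    have hsub : S ⊆ G.edgeFinset.biUnion (fun e =>
        ((G.edgeFinset.filter (fun f => col f = col e)).erase e).image (fun f => (e, f))) := by
      intro p hp
      simp only [hS, Finset.mem_filter, Finset.mem_product] at hp
      obtain ⟨⟨h1, h2⟩, hne, hcol⟩ := hp
      simp only [Finset.mem_biUnion, Finset.mem_image, Finset.mem_erase, Finset.mem_filter]
      exact ⟨p.1, h1, p.2, ⟨Ne.symm hne, h2, hcol.symm⟩, rfl⟩
    calc S.card ≤ _ := Finset.card_le_card hsub
      _ ≤ ∑ e ∈ G.edgeFinset,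
          (((G.edgeFinset.filter (fun f => col f = col e)).erase e).image
            (fun f => (e, f))).card := Finset.card_biUnion_le
      _ ≤ ∑ _e ∈ G.edgeFinset, (k - 1) := by
          apply Finset.sum_le_sum
          intro e he
          calc (((G.edgeFinset.filter (fun f => col f = col e)).erase e).image
                  (fun f => (e, f))).card
              ≤ ((G.edgeFinset.filter (fun f => col f = col e)).erase e).card :=
                Finset.card_image_le
            _ = (G.edgeFinset.filter (fun f => col f = col e)).card - 1 :=
                Finset.card_erase_of_mem (by simp [he])
            _ ≤ k - 1 := Nat.sub_le_sub_right (hclass (col e)) 1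
      _ = m * (k - 1) := by rw [Finset.sum_const, hm, smul_eq_mul]
  set φ : Finset V → Finset (Sym2 V × Sym2 V) := fun T =>
    S.filter (fun p => p.1 ∈ T.sym2 ∧ p.2 ∈ T.sym2) with hφ
  have hA : ∀ T ∈ G.cliqueFinset 3, 2 ≤ (φ T).card := by
    intro T hT
    rw [SimpleGraph.mem_cliqueFinset_iff, SimpleGraph.is3Clique_iff] at hT
    obtain ⟨x, y, z, hxy, hxz, hyz, rfl⟩ := hT
    have key : ∃ e f : Sym2 V, e ∈ G.edgeFinset ∧ f ∈ G.edgeFinset ∧ e ≠ f ∧ col e = col f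
        ∧ e ∈ ({x, y, z} : Finset V).sym2 ∧ f ∈ ({x, y, z} : Finset V).sym2 := by
      by_cases h1 : col s(x, y) = col s(y, z)
      · exact ⟨s(x, y), s(y, z), by simpa using hxy, by simpa using hyz,
          by simp [Sym2.eq_iff, hxy.ne, hxz.ne], h1, by simp, by simp⟩
      by_cases h2 : col s(y, z) = col s(x, z)
      · exact ⟨s(y, z), s(x, z), by simpa using hyz, by simpa using hxz,
          by simp [Sym2.eq_iff, hxy.ne, hyz.ne, hxz.ne, Ne.symm hxy.ne], h2, by simp, by simp⟩
      · have h3 := hrb x y z hxy hyz hxz h1 h2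
        exact ⟨s(x, y), s(x, z), by simpa using hxy, by simpa using hxz,
          by simp [Sym2.eq_iff, hxy.ne, hyz.ne, hxz.ne], h3, by simp, by simp⟩
    obtain ⟨e, f, he, hf, hef, hcol, heT, hfT⟩ := key
    have hmem : ∀ q : Sym2 V × Sym2 V, q = (e, f) ∨ q = (f, e) → q ∈ φ ({x, y, z} : Finset V) := by
      rintro q (rfl | rfl) <;>
        simp only [hφ, hS, Finset.mem_filter, Finset.mem_product] <;>
        exact ⟨⟨⟨by assumption, by assumption⟩, by first | exact hef | exact (Ne.symm hef),
          by first | exact hcol | exact hcol.symm⟩, by constructor <;> assumption⟩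
    refine Finset.one_lt_card.mpr ⟨(e, f), hmem _ (Or.inl rfl), (f, e), hmem _ (Or.inr rfl), ?_⟩
    simp [hef]
  have hB : ∀ T ∈ G.cliqueFinset 3, ∀ T' ∈ G.cliqueFinset 3, T ≠ T' → Disjoint (φ T) (φ T') := by
    intro T hT T' hT' hne
    rw [Finset.disjoint_left]
    intro p hp hp'
    apply hne
    simp only [hφ, hS, Finset.mem_filter, Finset.mem_product] at hp hp'
    obtain ⟨⟨⟨he, hf⟩, hnef, _⟩, h1T, h2T⟩ := hp
    obtain ⟨_, h1T', h2T'⟩ := hp'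
    obtain ⟨⟨a, b⟩, hab⟩ := Quot.exists_rep p.1
    obtain ⟨⟨c, d⟩, hcd⟩ := Quot.exists_rep p.2
    have hab' : p.1 = s(a, b) := hab.symm
    have hcd' : p.2 = s(c, d) := hcd.symm
    rw [hab'] at he h1T h1T'
    rw [hcd'] at hf h2T h2T'
    rw [hab', hcd'] at hnef
    have hadj_ab : G.Adj a b := by simpa using he
    have hadj_cd : G.Adj c d := by simpa using hf
    have hne_ab : a ≠ b := hadj_ab.ne
    have hne_cd : c ≠ d := hadj_cd.ne
    rw [Finset.mk_mem_sym2_iff] at h1T h1T' h2T h2T'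
    have key : ∀ w : V, a ≠ w → b ≠ w →
        ∀ U ∈ G.cliqueFinset 3, a ∈ U → b ∈ U → w ∈ U → U = {a, b, w} := by
      intro w haw hbw U hU haU hbU hwU
      have hcard := (SimpleGraph.mem_cliqueFinset_iff.mp hU).2
      refine (Finset.eq_of_subset_of_card_le ?_ ?_).symm
      · intro v hv
        simp only [Finset.mem_insert, Finset.mem_singleton] at hv
        rcases hv with rfl | rfl | rfl <;> assumption
      · rw [hcard, Finset.card_eq_three.mpr ⟨a, b, w, hne_ab, haw, hbw, rfl⟩]
    have houtside : (c ≠ a ∧ c ≠ b) ∨ (d ≠ a ∧ d ≠ b) := by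
      by_contra h
      push_neg at h
      obtain ⟨hc, hd⟩ := h
      apply hnef
      by_cases hca : c = a
      · subst hca
        have hdb : d = b := hd (fun hda => hne_cd hda.symm)
        subst hdb
        rfl
      · have hcb : c = b := hc hca
        subst hcb
        have hda : d = a := by
          by_cases hda : d = a
          · exact hda
          · exact absurd (hd hda) (Ne.symm hne_cd)
        subst hda
        exact Sym2.eq_swap
    rcases houtside with ⟨h1, h2⟩ | ⟨h1, h2⟩
    · rw [key c (Ne.symm h1) (Ne.symm h2) T hT h1T.1 h1T.2 h2T.1,
        key c (Ne.symm h1) (Ne.symm h2) T' hT' h1T'.1 h1T'.2 h2T'.1]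
    · rw [key d (Ne.symm h1) (Ne.symm h2) T hT h1T.1 h1T.2 h2T.2,
        key d (Ne.symm h1) (Ne.symm h2) T' hT' h1T'.1 h1T'.2 h2T'.2]
  calc 2 * (G.cliqueFinset 3).card
      = ∑ _T ∈ G.cliqueFinset 3, 2 := by rw [Finset.sum_const, smul_eq_mul, mul_comm]
    _ ≤ ∑ T ∈ G.cliqueFinset 3, (φ T).card := Finset.sum_le_sum hA
    _ = ((G.cliqueFinset 3).biUnion φ).card := (Finset.card_biUnion hB).symm
    _ ≤ S.card := Finset.card_le_card (by
        intro p hp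
        simp only [Finset.mem_biUnion] at hp
        obtain ⟨T, _, hp⟩ := hp
        exact (Finset.mem_filter.mp hp).1)
    _ ≤ m * (k - 1) := hScard
end

section
/- If G is a simple graph with n vertices and m edges, then the number of triangles in G is at least (4m/(3n)) * (m - n^2/4). -/
open Finset

private lemma goodman_fiber_card_le {V : Type*} [Fintype V] [DecidableEq V]
    (G : SimpleGraph V) [DecidableRel G.Adj]
    (t : Finset V) (ht : t ∈ G.cliqueFinset 3) :
    ((univ.filter (fun p : V × V × V =>
        G.Adj p.1 p.2.1 ∧ G.Adj p.1 p.2.2 ∧ G.Adj p.2.1 p.2.2)).filter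
      (fun p => ({p.1, p.2.1, p.2.2} : Finset V) = t)).card ≤ 6 := by
  rw [SimpleGraph.mem_cliqueFinset_iff, SimpleGraph.is3Clique_iff] at ht
  obtain ⟨a, b, c, hab, hac, hbc, rfl⟩ := ht
  have hsub : ((univ.filter (fun p : V × V × V =>
        G.Adj p.1 p.2.1 ∧ G.Adj p.1 p.2.2 ∧ G.Adj p.2.1 p.2.2)).filter
      (fun p => ({p.1, p.2.1, p.2.2} : Finset V) = {a, b, c}))
      ⊆ {(a,b,c),(a,c,b),(b,a,c),(b,c,a),(c,a,b),(c,b,a)} := by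
    rintro ⟨x, y, z⟩ hp
    simp only [mem_filter, mem_univ, true_and] at hp
    obtain ⟨⟨hxy, hxz, hyz⟩, heq⟩ := hp
    have hx : x = a ∨ x = b ∨ x = c := by
      have : x ∈ ({x, y, z} : Finset V) := by simp
      rw [heq] at this; simpa using this
    have hy : y = a ∨ y = b ∨ y = c := by
      have : y ∈ ({x, y, z} : Finset V) := by simp
      rw [heq] at this; simpa using this
    have hz : z = a ∨ z = b ∨ z = c := by
      have : z ∈ ({x, y, z} : Finset V) := by simp
      rw [heq] at this; simpa using this
    have h1 := hxy.ne
    have h2 := hxz.ne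
    have h3 := hyz.ne
    rcases hx with rfl | rfl | rfl <;> rcases hy with rfl | rfl | rfl <;>
      rcases hz with rfl | rfl | rfl <;> simp_all
  refine le_trans (card_le_card hsub) ?_
  have := List.toFinset_card_le [(a,b,c),(a,c,b),(b,a,c),(b,c,a),(c,a,b),(c,b,a)]
  simpa using this

/-- Goodman's bound. A graph with `n` vertices and `m` edges has at
least `(4m/(3n)) * (m - n²/4)` triangles. -/
theorem stmt1 {V : Type*} [Fintype V] [DecidableEq V] (G : SimpleGraph V)
    [DecidableRel G.Adj] (n m : ℕ)
    (hn : n = Fintype.card V) (hm : m = G.edgeFinset.card) :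
    (4 * (m : ℝ) / (3 * n)) * ((m : ℝ) - (n : ℝ) ^ 2 / 4)
      ≤ ((G.cliqueFinset 3).card : ℝ) := by
  set A : Finset (V × V × V) := univ.filter (fun p : V × V × V =>
      G.Adj p.1 p.2.1 ∧ G.Adj p.1 p.2.2 ∧ G.Adj p.2.1 p.2.2) with hA_def
  set T : ℕ := (G.cliqueFinset 3).card with hT_def
  -- A.card ≤ 6 * T
  have hA_le : A.card ≤ 6 * T := by
    refine Finset.card_le_mul_card_image_of_maps_to
      (f := fun p : V × V × V => ({p.1, p.2.1, p.2.2} : Finset V))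
      (t := G.cliqueFinset 3) ?_ 6 (goodman_fiber_card_le G)
    rintro ⟨x, y, z⟩ hp
    simp only [hA_def, mem_filter, mem_univ, true_and] at hp
    rw [SimpleGraph.mem_cliqueFinset_iff, SimpleGraph.is3Clique_triple_iff]
    exact hp
  -- A.card as a double sum of common-neighbor counts
  have hA_eq : A.card = ∑ u, ∑ v ∈ G.neighborFinset u,
      (univ.filter (fun w => G.Adj u w ∧ G.Adj v w)).card := by
    rw [hA_def, Finset.card_filter, Fintype.sum_prod_type]
    refine Finset.sum_congr rfl fun u _ => ?_
    rw [Fintype.sum_prod_type]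
    rw [show G.neighborFinset u = univ.filter (G.Adj u) by ext; simp]
    rw [Finset.sum_filter]
    refine Finset.sum_congr rfl fun v _ => ?_
    by_cases h : G.Adj u v
    · rw [if_pos h, Finset.card_filter]
      exact Finset.sum_congr rfl fun w _ => by rw [if_congr (and_iff_right h) rfl rfl]
    · simp [h]
  -- pointwise: degree sum bound
  have hpt : ∀ u v : V, G.degree u + G.degree v
      ≤ (univ.filter (fun w => G.Adj u w ∧ G.Adj v w)).card + n := by
    intro u v
    have h1 : (univ.filter (fun w => G.Adj u w ∧ G.Adj v w))
        = G.neighborFinset u ∩ G.neighborFinset v := by ext w; simp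
    have h2 := Finset.card_union_add_card_inter (G.neighborFinset u) (G.neighborFinset v)
    have h3 : (G.neighborFinset u ∪ G.neighborFinset v).card ≤ Fintype.card V :=
      Finset.card_le_univ _
    rw [h1]
    simp only [SimpleGraph.card_neighborFinset_eq_degree] at h2
    omega
  -- the two degree-square sums
  have hdeg2 : ∑ u, ∑ v ∈ G.neighborFinset u, G.degree v = ∑ u, G.degree u ^ 2 := by
    have hrw : ∀ u, ∑ v ∈ G.neighborFinset u, G.degree v
        = ∑ v, if G.Adj u v then G.degree v else 0 := by
      intro u
      rw [show G.neighborFinset u = univ.filter (G.Adj u) by ext; simp, Finset.sum_filter]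
    simp only [hrw]
    rw [Finset.sum_comm]
    refine Finset.sum_congr rfl fun v _ => ?_
    simp only [G.adj_comm _ v]
    rw [← Finset.sum_filter, show univ.filter (G.Adj v) = G.neighborFinset v by ext; simp]
    simp [SimpleGraph.card_neighborFinset_eq_degree, sq]
  have hdeg1 : ∑ u, ∑ _v ∈ G.neighborFinset u, G.degree u = ∑ u, G.degree u ^ 2 := by
    refine Finset.sum_congr rfl fun u _ => ?_
    rw [Finset.sum_const, SimpleGraph.card_neighborFinset_eq_degree, smul_eq_mul, sq]
  have hsumdeg : ∑ u, G.degree u = 2 * m := by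
    rw [hm]; exact G.sum_degrees_eq_twice_card_edges
  have hconst : ∑ u, ∑ _v ∈ G.neighborFinset u, n = 2 * m * n := by
    simp only [Finset.sum_const, SimpleGraph.card_neighborFinset_eq_degree, smul_eq_mul]
    rw [← Finset.sum_mul, hsumdeg]
  -- key counting inequality: 2 Σ deg² ≤ A.card + 2mn
  have hkey : 2 * ∑ u, G.degree u ^ 2 ≤ A.card + 2 * m * n := by
    have : ∑ u, ∑ v ∈ G.neighborFinset u, (G.degree u + G.degree v)
        ≤ ∑ u, ∑ v ∈ G.neighborFinset u,
          ((univ.filter (fun w => G.Adj u w ∧ G.Adj v w)).card + n) :=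
      Finset.sum_le_sum fun u _ => Finset.sum_le_sum fun v _ => hpt u v
    simp only [Finset.sum_add_distrib] at this
    rw [hdeg1, hdeg2, ← hA_eq, hconst] at this
    omega
  -- Cauchy-Schwarz over ℝ
  have hcs : ((2 * m : ℕ) : ℝ) ^ 2 ≤ (n : ℝ) * ∑ u, (G.degree u : ℝ) ^ 2 := by
    have h := sq_sum_le_card_mul_sum_sq (s := (univ : Finset V))
      (f := fun u => (G.degree u : ℝ))
    rw [← Nat.cast_sum, hsumdeg] at h
    simpa [hn] using h
  have hT0 : (0 : ℝ) ≤ (T : ℝ) := Nat.cast_nonneg _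
  -- combine in ℝ
  have hkeyR : 2 * ∑ u, (G.degree u : ℝ) ^ 2 ≤ 6 * (T : ℝ) + 2 * m * n := by
    have h : 2 * ∑ u, G.degree u ^ 2 ≤ 6 * T + 2 * m * n := by omega
    have h' := (Nat.cast_le (α := ℝ)).2 h
    push_cast at h'
    linarith
  rcases Nat.eq_zero_or_pos n with h0 | hpos
  · rw [h0]
    simp
  · have hnR : (0 : ℝ) < n := by exact_mod_cast hpos
    rw [div_mul_eq_mul_div, div_le_iff₀ (by positivity)]
    have h4 : (4 : ℝ) * m ^ 2 ≤ 3 * n * T + m * n ^ 2 := by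
      have hmul := mul_le_mul_of_nonneg_left hkeyR hnR.le
      push_cast at hcs
      nlinarith [hcs, hmul]
    nlinarith [h4]
end

section
/- Let G be an edge-coloured graph on n vertices with at least (9/8)n colour classes, each of size at least n/3. Then G contains a rainbow triangle. -/
/-!
Suppose `G` has no rainbow triangle, and let `n`, `e`, `c` be its numbers of vertices, edges and
colours. Summing `deg v + deg u ≤ n + codeg(v, u)` over ordered edges `vu` gives
`2 ∑ deg² ≤ 2en + ∑ codeg`. A common neighbour `w` of `v` and `u` is either monochromatic
(`vw` and `uw` have the same colour), and these are counted by the squares of the degrees inside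
the colour classes, or it sees two colours; then, `vuw` not being rainbow, one of `vw`, `uw` has
the colour of `vu`. As there are at least `9n/8` classes of at least `n/3` edges each, no class
has more than `(3n² - 4n)/24` edges, and a class with `m` edges contributes at most
`4nm + 2m - n² - n` (for large classes this uses Cauchy–Schwarz on `∑ min (deg v) (deg u)`
over its edges). Summing over the classes, `2 ∑ deg² + c (n² + n) ≤ 6en`, whereas `4e² ≤ n ∑ deg²` by
Cauchy–Schwarz; hence `c (n² + n) ≤ 6en - 8e²/n ≤ 9n³/8`, contradicting `8c ≥ 9n`.
-/

open Finset

lemma two_mul_cube_le_sq {n m : ℤ} (hn : 11 ≤ n) (hm : n + 2 ≤ m)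
    (h24 : 24 * m + 4 * n ≤ 3 * n ^ 2) (hmn : 4 * n + 5 * (m - n) < (m - n) ^ 2) :
    2 * m ^ 3 ≤ (n * m + 6 * m - n ^ 2 - n) ^ 2 := by
  have hC : 0 ≤ n * m + 6 * m - n ^ 2 - n := by nlinarith
  rcases le_or_gt (m - n) n with hbn | hbn
  · have k1 : 4 * n ^ 3 ≤ n ^ 2 * (m - n) ^ 2 := by nlinarith [sq_nonneg n]
    have k2 : (m - n) ^ 3 ≤ n * (m - n) ^ 2 := by nlinarith [sq_nonneg (m - n)]
    nlinarith [mul_nonneg (mul_nonneg (by linarith : (0 : ℤ) ≤ m - n)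
      (by linarith : (0 : ℤ) ≤ m - n)) (by linarith : (0 : ℤ) ≤ n)]
  · have hnm : n * m ≤ 2 * (n * m + 6 * m - n ^ 2 - n) := by nlinarith
    have h1 : 8 * m * m ^ 2 ≤ n ^ 2 * m ^ 2 :=
      mul_le_mul_of_nonneg_right (by linarith) (sq_nonneg m)
    nlinarith [mul_nonneg (mul_nonneg (by linarith : (0 : ℤ) ≤ n)
      (by linarith : (0 : ℤ) ≤ m)) hC]

lemma excess_le_of_large_class {n m Z : ℤ} (hn : 0 ≤ n) (hm : n + 2 ≤ m)
    (h24 : 24 * m + 4 * n ≤ 3 * n ^ 2) (hZ : 0 ≤ Z) (hZm : Z ≤ 2 * m * (m + 1 - n))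
    (hZsq : Z ^ 2 ≤ 8 * m ^ 3) :
    Z ≤ 2 * (n * m + 6 * m - n ^ 2 - n) := by
  -- below the threshold `Z ≤ 2m(m + 1 - n)` suffices, above it `Z² ≤ 8m³` does
  rcases le_or_gt ((m - n) ^ 2) (4 * n + 5 * (m - n)) with hmn | hmn
  · nlinarith
  · have hn11 : 11 ≤ n := by
      by_contra! h
      nlinarith [mul_nonneg (by linarith : (0 : ℤ) ≤ 10 - n) hn]
    have := two_mul_cube_le_sq hn11 hm h24 hmn
    exact (pow_le_pow_iff_left₀ hZ (by nlinarith) two_ne_zero).1 (by nlinarith)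

lemma small_class_bound {n m S W : ℕ} (hnm : n ≤ 3 * m) (hm : m ≤ n + 1)
    (hS : S ≤ m * (m + 1)) (hW : W + 4 * m ≤ 2 * S) :
    S + W + n ^ 2 + n ≤ 4 * n * m + 2 * m := by
  zify at *
  nlinarith [mul_nonneg (by linarith : (0 : ℤ) ≤ 3 * m - n)
    (by linarith : (0 : ℤ) ≤ n + 1 - m)]

lemma large_class_bound {n m S W Z : ℕ} (hm : n + 2 ≤ m) (h24 : 24 * m + 4 * n ≤ 3 * n ^ 2)
    (hS : 2 * S ≤ 2 * m * n + Z) (hW : W + 4 * m ≤ 2 * m * n)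
    (hZm : Z + 2 * m * n ≤ 2 * m * (m + 1)) (hZsq : Z ^ 2 ≤ 8 * m ^ 3) :
    S + W + n ^ 2 + n ≤ 4 * n * m + 2 * m := by
  zify at *
  have := excess_le_of_large_class (Z := Z) (by positivity) hm h24 (by positivity)
    (by linarith) hZsq
  nlinarith

lemma six_mul_mul_lt_of_sq_le {n c e D : ℕ} (hn : 0 < n) (hc : 9 * n ≤ 8 * c)
    (hD : (2 * e) ^ 2 ≤ n * D) :
    6 * e * n < 2 * D + c * (n ^ 2 + n) := by
  by_contra! h
  zify at *
  nlinarith [sq_nonneg (8 * (e : ℤ) - 3 * n ^ 2),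
    mul_le_mul_of_nonneg_left h (by positivity : (0 : ℤ) ≤ n),
    mul_le_mul_of_nonneg_right hc (by positivity : (0 : ℤ) ≤ n ^ 3)]

namespace SimpleGraph

section General

variable {V : Type*} [Fintype V] (H : SimpleGraph V) [DecidableRel H.Adj]

lemma sum_sum_neighborFinset_comm {M : Type*} [AddCommMonoid M] (f : V → V → M) :
    ∑ v, ∑ u ∈ H.neighborFinset v, f v u = ∑ v, ∑ u ∈ H.neighborFinset v, f u v :=
  Finset.sum_comm' fun v u => by simp [H.adj_comm]

lemma sum_sum_neighborFinset_left {M : Type*} [AddCommMonoid M] (f : V → M) :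
    ∑ v, ∑ _u ∈ H.neighborFinset v, f v = ∑ v, H.degree v • f v := by
  simp

lemma sum_sum_neighborFinset_const (c : ℕ) :
    ∑ v, ∑ _u ∈ H.neighborFinset v, c = 2 * #H.edgeFinset * c := by
  simp [← Finset.sum_mul, H.sum_degrees_eq_twice_card_edges]

lemma sum_sum_neighborFinset_degree_add_degree :
    ∑ v, ∑ u ∈ H.neighborFinset v, (H.degree v + H.degree u) = 2 * ∑ v, H.degree v ^ 2 := by
  rw [Finset.sum_congr rfl fun v _ => Finset.sum_add_distrib, Finset.sum_add_distrib,
    ← sum_sum_neighborFinset_comm H fun v _ => H.degree v, two_mul, sum_sum_neighborFinset_left]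
  simp [sq]

lemma degree_add_degree_le_card_add_card_inter [DecidableEq V] (v u : V) :
    H.degree v + H.degree u ≤ Fintype.card V + #(H.neighborFinset v ∩ H.neighborFinset u) := by
  rw [← card_neighborFinset_eq_degree, ← card_neighborFinset_eq_degree,
    ← card_union_add_card_inter]
  exact Nat.add_le_add_right (card_le_univ _) _

lemma Adj.degree_add_degree_le [DecidableEq V] {v u : V} (h : H.Adj v u) :
    H.degree v + H.degree u ≤ #H.edgeFinset + 1 := by
  have hinter : #(H.incidenceFinset v ∩ H.incidenceFinset u) = 1 :=
    card_eq_one.2 ⟨s(v, u), coe_injective <| by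
      simp [coe_incidenceFinset, H.incidenceSet_inter_incidenceSet_of_adj h]⟩
  rw [← card_incidenceFinset_eq_degree, ← card_incidenceFinset_eq_degree,
    ← card_union_add_card_inter, hinter]
  exact Nat.add_le_add_right (card_le_card <| union_subset (H.incidenceFinset_subset v)
    (H.incidenceFinset_subset u)) _

lemma sq_sum_sum_min_degree_le :
    (∑ v, ∑ u ∈ H.neighborFinset v, min (H.degree v) (H.degree u)) ^ 2
      ≤ 8 * #H.edgeFinset ^ 3 := by
  set m := #H.edgeFinset
  have hdarts : #(univ.sigma (H.neighborFinset ·)) = 2 * m := by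
    simp [card_sigma, H.sum_degrees_eq_twice_card_edges, m]
  have hinner : ∀ v, ∑ u ∈ H.neighborFinset v, H.degree u ≤ 2 * m := fun v =>
    (sum_le_sum_of_subset (subset_univ _)).trans H.sum_degrees_eq_twice_card_edges.le
  calc (∑ v, ∑ u ∈ H.neighborFinset v, min (H.degree v) (H.degree u)) ^ 2
      = (∑ x ∈ univ.sigma (H.neighborFinset ·), min (H.degree x.1) (H.degree x.2)) ^ 2 := by
        rw [sum_sigma]
    _ ≤ 2 * m * ∑ x ∈ univ.sigma (H.neighborFinset ·),
          min (H.degree x.1) (H.degree x.2) ^ 2 := by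
        rw [← hdarts]; exact sq_sum_le_card_mul_sum_sq
    _ ≤ 2 * m * ∑ v, ∑ u ∈ H.neighborFinset v, H.degree v * H.degree u := by
        rw [sum_sigma]
        gcongr with v _ u _
        rw [sq]
        exact Nat.mul_le_mul (min_le_left _ _) (min_le_right _ _)
    _ ≤ 2 * m * ∑ v, H.degree v * (2 * m) := by
        simp only [← mul_sum]
        gcongr with v
        exact hinner v
    _ = 8 * m ^ 3 := by
        rw [← sum_mul, H.sum_degrees_eq_twice_card_edges]; ring

lemma sum_card_inter_neighborFinset [DecidableEq V] (v : V) :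
    ∑ u, #(H.neighborFinset v ∩ H.neighborFinset u)
      = ∑ w ∈ H.neighborFinset v, H.degree w := by
  calc ∑ u, #(H.neighborFinset v ∩ H.neighborFinset u)
      = ∑ u, ∑ w ∈ H.neighborFinset v, if H.Adj w u then 1 else 0 := by
        simp only [sum_boole, Nat.cast_id]
        exact sum_congr rfl fun u _ => congrArg card <| by ext w; simp [H.adj_comm]
    _ = _ := by
        rw [sum_comm]
        simp [sum_boole, ← card_neighborFinset_eq_degree, neighborFinset_eq_filter]

lemma sum_sum_card_inter_neighborFinset [DecidableEq V] :
    ∑ v, ∑ u, #(H.neighborFinset v ∩ H.neighborFinset u) = ∑ v, H.degree v ^ 2 := by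
  simp_rw [sum_card_inter_neighborFinset]
  rw [sum_sum_neighborFinset_comm H fun _ w => H.degree w, sum_sum_neighborFinset_left]
  simp [sq]

lemma sum_sum_neighborFinset_add_sum_le {f : V → V → ℕ} :
    ∑ v, ∑ u ∈ H.neighborFinset v, f v u + ∑ v, f v v ≤ ∑ v, ∑ u, f v u := by
  classical
  rw [← sum_add_distrib]
  refine sum_le_sum fun v _ => ?_
  rw [add_comm, ← sum_insert (f := f v) (H.notMem_neighborFinset_self v)]
  exact sum_le_sum_of_subset (subset_univ _)

lemma two_mul_card_edgeFinset_add_card_le :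
    2 * #H.edgeFinset + Fintype.card V ≤ Fintype.card V ^ 2 := by
  calc 2 * #H.edgeFinset + Fintype.card V = ∑ v, (H.degree v + 1) := by
        simp [sum_add_distrib, sum_degrees_eq_twice_card_edges]
    _ ≤ ∑ _v : V, Fintype.card V := sum_le_sum fun v _ => H.degree_lt_card_verts v
    _ = Fintype.card V ^ 2 := by simp [sq]

lemma sq_two_mul_card_edgeFinset_le :
    (2 * #H.edgeFinset) ^ 2 ≤ Fintype.card V * ∑ v, H.degree v ^ 2 := by
  rw [← sum_degrees_eq_twice_card_edges, ← card_univ]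
  exact sq_sum_le_card_mul_sum_sq

lemma sum_sum_neighborFinset_le_mul {f : V → V → ℕ} {c : ℕ}
    (h : ∀ v u, H.Adj v u → f v u ≤ c) :
    ∑ v, ∑ u ∈ H.neighborFinset v, f v u ≤ 2 * #H.edgeFinset * c := by
  rw [← sum_sum_neighborFinset_const]
  exact sum_le_sum fun v _ => sum_le_sum fun u hu => h v u ((H.mem_neighborFinset v u).1 hu)

lemma sum_sq_degree_add_sum_le [DecidableEq V] (w : V → V → ℕ)
    (hw_card : ∀ v u, H.Adj v u → w v u + 2 ≤ Fintype.card V)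
    (hw_deg : ∀ v u, H.Adj v u → w v u + 2 ≤ H.degree v + H.degree u)
    (hnm : Fintype.card V ≤ 3 * #H.edgeFinset)
    (h24 : 24 * #H.edgeFinset + 4 * Fintype.card V ≤ 3 * Fintype.card V ^ 2) :
    ∑ v, H.degree v ^ 2 + ∑ v, ∑ u ∈ H.neighborFinset v, w v u + Fintype.card V ^ 2
      + Fintype.card V ≤ 4 * Fintype.card V * #H.edgeFinset + 2 * #H.edgeFinset := by
  set n := Fintype.card V
  set m := #H.edgeFinset
  have hsum := H.sum_sum_neighborFinset_degree_add_degree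
  have hplus2 : ∑ v, ∑ u ∈ H.neighborFinset v, (w v u + 2)
      = ∑ v, ∑ u ∈ H.neighborFinset v, w v u + 4 * m := by
    simp only [sum_add_distrib, sum_sum_neighborFinset_const]; ring
  have hW : ∑ v, ∑ u ∈ H.neighborFinset v, w v u + 4 * m ≤ 2 * ∑ v, H.degree v ^ 2 := by
    rw [← hplus2, ← hsum]
    exact sum_le_sum fun v _ => sum_le_sum fun u hu =>
      hw_deg v u ((H.mem_neighborFinset v u).1 hu)
  rcases le_or_gt m (n + 1) with hm | hm
  · have := H.sum_sum_neighborFinset_le_mul fun _ _ h => h.degree_add_degree_le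
    exact small_class_bound hnm hm (by nlinarith) hW
  · set Z := ∑ v, ∑ u ∈ H.neighborFinset v, (H.degree v + H.degree u - n)
    have hZ : Z + 2 * m * n ≤ 2 * m * (m + 1) := by
      have := H.sum_sum_neighborFinset_le_mul (c := m + 1)
        (f := fun v u => H.degree v + H.degree u - n + n)
        fun v u h => by have := h.degree_add_degree_le; omega
      simpa only [sum_add_distrib, sum_sum_neighborFinset_const] using this
    refine large_class_bound hm h24 ?_ (hplus2 ▸ H.sum_sum_neighborFinset_le_mul hw_card) hZ ?_
    · calc _ ≤ ∑ v, ∑ u ∈ H.neighborFinset v, (n + (H.degree v + H.degree u - n)) := by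
            rw [← hsum]; exact sum_le_sum fun v _ => sum_le_sum fun u _ => by omega
        _ = _ := by simp only [sum_add_distrib, sum_sum_neighborFinset_const, Z]; ring
    · refine le_trans ?_ H.sq_sum_sum_min_degree_le
      gcongr
      refine sum_le_sum fun v _ => sum_le_sum fun u _ => ?_
      have := H.degree_lt_card_verts v
      have := H.degree_lt_card_verts u
      omega

end General

section Coloring

variable {V ι : Type*} (G : SimpleGraph V) (col : Sym2 V → ι)

def colorClass (j : ι) : SimpleGraph V where
  Adj v u := G.Adj v u ∧ col s(v, u) = j
  symm := ⟨fun _ _ h => ⟨h.1.symm, Sym2.eq_swap ▸ h.2⟩⟩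
  loopless := ⟨fun _ h => G.irrefl h.1⟩

@[simp]
lemma colorClass_adj {j : ι} {v u : V} :
    (G.colorClass col j).Adj v u ↔ G.Adj v u ∧ col s(v, u) = j :=
  Iff.rfl

instance [DecidableRel G.Adj] [DecidableEq ι] (j : ι) : DecidableRel (G.colorClass col j).Adj :=
  fun v u => inferInstanceAs (Decidable (G.Adj v u ∧ col s(v, u) = j))

def IsRainbowTriangleFree : Prop :=
  ∀ ⦃x y z⦄, G.Adj x y → G.Adj y z → G.Adj x z →
    col s(x, y) = col s(y, z) ∨ col s(y, z) = col s(x, z) ∨ col s(x, y) = col s(x, z)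

variable [Fintype V] [DecidableRel G.Adj] [DecidableEq ι]

lemma edgeFinset_colorClass (j : ι) :
    (G.colorClass col j).edgeFinset = {e ∈ G.edgeFinset | col e = j} := by
  ext e
  induction e using Sym2.ind
  simp

lemma neighborFinset_colorClass (j : ι) (v : V) :
    (G.colorClass col j).neighborFinset v = {u ∈ G.neighborFinset v | col s(v, u) = j} := by
  ext u
  simp

lemma sum_card_edgeFinset_colorClass [Fintype ι] :
    ∑ j, #(G.colorClass col j).edgeFinset = #G.edgeFinset := by
  simp_rw [edgeFinset_colorClass]
  exact (card_eq_sum_card_fiberwise fun _ _ => mem_univ _).symm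

lemma sum_sum_neighborFinset_eq_sum_colorClass [Fintype ι] {M : Type*} [AddCommMonoid M]
    (F : V → V → M) :
    ∑ v, ∑ u ∈ G.neighborFinset v, F v u
      = ∑ j, ∑ v, ∑ u ∈ (G.colorClass col j).neighborFinset v, F v u := by
  rw [sum_comm]
  refine sum_congr rfl fun v _ => ?_
  simp_rw [neighborFinset_colorClass]
  exact (sum_fiberwise_of_maps_to (fun _ _ => mem_univ _) _).symm

lemma twenty_four_mul_card_edgeFinset_colorClass_add_le [Fintype ι]
    (hnum : 9 * Fintype.card V ≤ 8 * Fintype.card ι)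
    (hnm : ∀ i, Fintype.card V ≤ 3 * #(G.colorClass col i).edgeFinset) (j : ι) :
    24 * #(G.colorClass col j).edgeFinset + 4 * Fintype.card V ≤ 3 * Fintype.card V ^ 2 := by
  have hrest : (Fintype.card ι - 1) * Fintype.card V
      ≤ 3 * ∑ i ∈ univ.erase j, #(G.colorClass col i).edgeFinset := by
    rw [← card_univ, ← card_erase_of_mem (mem_univ j), mul_sum, ← smul_eq_mul, ← sum_const]
    exact sum_le_sum fun i _ => hnm i
  have hsplit := add_sum_erase univ (fun i => #(G.colorClass col i).edgeFinset) (mem_univ j)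
  rw [sum_card_edgeFinset_colorClass] at hsplit
  have := G.two_mul_card_edgeFinset_add_card_le
  have hc : 1 ≤ Fintype.card ι := Fintype.card_pos_iff.2 ⟨j⟩
  zify [hc] at *
  nlinarith

variable [DecidableEq V]

def monoCodegree (v u : V) : ℕ :=
  #{w ∈ G.neighborFinset v ∩ G.neighborFinset u | col s(v, w) = col s(u, w)}

def mixedCodegree (v u : V) : ℕ :=
  #{w ∈ G.neighborFinset v ∩ G.neighborFinset u | col s(v, w) ≠ col s(u, w)}

lemma monoCodegree_add_mixedCodegree (v u : V) :
    G.monoCodegree col v u + G.mixedCodegree col v u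
      = #(G.neighborFinset v ∩ G.neighborFinset u) :=
  card_filter_add_card_filter_not _

lemma monoCodegree_eq_sum_colorClass [Fintype ι] (v u : V) :
    G.monoCodegree col v u
      = ∑ j, #((G.colorClass col j).neighborFinset v
          ∩ (G.colorClass col j).neighborFinset u) := by
  rw [monoCodegree, card_eq_sum_card_fiberwise (f := fun w => col s(v, w)) fun _ _ => mem_univ _]
  refine sum_congr rfl fun j _ => congrArg card ?_
  ext w
  simp only [mem_filter, mem_inter, neighborFinset_colorClass, mem_neighborFinset]
  constructor
  · rintro ⟨⟨⟨hv, hu⟩, hvu⟩, rfl⟩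
    exact ⟨⟨hv, rfl⟩, hu, hvu.symm⟩
  · rintro ⟨⟨hv, rfl⟩, hu, hvu⟩
    exact ⟨⟨⟨hv, hu⟩, hvu.symm⟩, rfl⟩

lemma monoCodegree_self (v : V) : G.monoCodegree col v v = G.degree v := by
  simp [monoCodegree]

lemma sum_sum_monoCodegree [Fintype ι] :
    ∑ v, ∑ u, G.monoCodegree col v u = ∑ j, ∑ v, (G.colorClass col j).degree v ^ 2 := by
  simp_rw [monoCodegree_eq_sum_colorClass, ← sum_sum_card_inter_neighborFinset]
  exact (sum_congr rfl fun _ _ => sum_comm).trans sum_comm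

lemma mixedCodegree_add_two_le_card {v u : V} (h : v ≠ u) :
    G.mixedCodegree col v u + 2 ≤ Fintype.card V := by
  have hsub : {w ∈ G.neighborFinset v ∩ G.neighborFinset u | col s(v, w) ≠ col s(u, w)}
      ⊆ (univ.erase v).erase u := fun w hw => by
    simp only [mem_filter, mem_inter, mem_neighborFinset] at hw
    simp [hw.1.1.ne', hw.1.2.ne']
  have := card_le_card hsub
  rw [card_erase_of_mem (mem_erase.2 ⟨h.symm, mem_univ u⟩), card_erase_of_mem (mem_univ v),
    card_univ] at this
  have := Fintype.one_lt_card_iff_nontrivial.2 ⟨⟨u, v, h.symm⟩⟩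
  rw [mixedCodegree]
  omega

variable {G col} in
lemma IsRainbowTriangleFree.mixedCodegree_add_two_le (hG : G.IsRainbowTriangleFree col)
    {j : ι} {v u : V} (h : (G.colorClass col j).Adj v u) :
    G.mixedCodegree col v u + 2
      ≤ (G.colorClass col j).degree v + (G.colorClass col j).degree u := by
  rw [mixedCodegree, ← card_neighborFinset_eq_degree, ← card_neighborFinset_eq_degree]
  set Nv := (G.colorClass col j).neighborFinset v
  set Nu := (G.colorClass col j).neighborFinset u
  have hu : u ∈ Nv := by simpa [Nv] using h
  have hv : v ∈ Nu := by simpa [Nu] using h.symm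
  have hsub : {w ∈ G.neighborFinset v ∩ G.neighborFinset u | col s(v, w) ≠ col s(u, w)}
      ⊆ Nv.erase u ∪ Nu.erase v := fun w hw => by
    simp only [mem_filter, mem_inter, mem_neighborFinset] at hw
    obtain ⟨⟨hvw, huw⟩, hne⟩ := hw
    simp only [Nv, Nu, mem_union, mem_erase, mem_neighborFinset, colorClass_adj]
    rcases hG h.1 huw hvw with hc | hc | hc
    · exact Or.inr ⟨hvw.ne', huw, hc ▸ h.2⟩
    · exact absurd hc.symm hne
    · exact Or.inl ⟨huw.ne', hvw, hc ▸ h.2⟩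
  have := (card_le_card hsub).trans (card_union_le _ _)
  have := card_pos.2 ⟨u, hu⟩
  have := card_pos.2 ⟨v, hv⟩
  rw [card_erase_of_mem hu, card_erase_of_mem hv] at *
  omega

variable {G col} in
lemma IsRainbowTriangleFree.two_mul_sum_sq_degree_add_le [Fintype ι]
    (hG : G.IsRainbowTriangleFree col)
    (hnm : ∀ j, Fintype.card V ≤ 3 * #(G.colorClass col j).edgeFinset)
    (h24 : ∀ j, 24 * #(G.colorClass col j).edgeFinset + 4 * Fintype.card V
      ≤ 3 * Fintype.card V ^ 2) :
    2 * ∑ v, G.degree v ^ 2 + Fintype.card ι * (Fintype.card V ^ 2 + Fintype.card V)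
      ≤ 6 * #G.edgeFinset * Fintype.card V := by
  have hcodeg : 2 * ∑ v, G.degree v ^ 2 ≤ 2 * #G.edgeFinset * Fintype.card V
      + ∑ v, ∑ u ∈ G.neighborFinset v, G.monoCodegree col v u
      + ∑ v, ∑ u ∈ G.neighborFinset v, G.mixedCodegree col v u := by
    rw [← sum_sum_neighborFinset_degree_add_degree, ← sum_sum_neighborFinset_const]
    simp_rw [← sum_add_distrib, add_assoc, monoCodegree_add_mixedCodegree]
    exact sum_le_sum fun v _ => sum_le_sum fun u _ =>
      G.degree_add_degree_le_card_add_card_inter v u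
  have hmono : ∑ v, ∑ u ∈ G.neighborFinset v, G.monoCodegree col v u + 2 * #G.edgeFinset
      ≤ ∑ j, ∑ v, (G.colorClass col j).degree v ^ 2 := by
    rw [← sum_sum_monoCodegree, ← sum_degrees_eq_twice_card_edges]
    simp_rw [← monoCodegree_self G col]
    exact G.sum_sum_neighborFinset_add_sum_le
  have hclass := sum_le_sum fun j (_ : j ∈ univ) => (G.colorClass col j).sum_sq_degree_add_sum_le
    (G.mixedCodegree col) (fun _ _ h => G.mixedCodegree_add_two_le_card col h.ne)
    (fun _ _ h => hG.mixedCodegree_add_two_le h) (hnm j) (h24 j)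
  simp only [sum_add_distrib, ← mul_sum, sum_card_edgeFinset_colorClass, sum_const,
    card_univ, smul_eq_mul] at hclass
  rw [G.sum_sum_neighborFinset_eq_sum_colorClass col (G.mixedCodegree col)] at hcodeg
  linarith

end Coloring

end SimpleGraph

open SimpleGraph in
/-- An edge-coloured graph on `n ≥ 1` vertices with at least `(9/8)n`
colour classes, each of size at least `n/3`, contains a rainbow triangle. -/
theorem stmt2 {V : Type*} [Fintype V] [DecidableEq V] [Nonempty V]
    (G : SimpleGraph V) [DecidableRel G.Adj] (n : ℕ) (hn : n = Fintype.card V)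
    {ι : Type*} [Fintype ι] [DecidableEq ι] (col : Sym2 V → ι)
    (hnum : 9 * n ≤ 8 * Fintype.card ι)
    (hsize : ∀ i : ι, n ≤ 3 * (G.edgeFinset.filter (fun e => col e = i)).card) :
    ∃ x y z : V, G.Adj x y ∧ G.Adj y z ∧ G.Adj x z ∧
      col s(x, y) ≠ col s(y, z) ∧ col s(y, z) ≠ col s(x, z) ∧ col s(x, y) ≠ col s(x, z) := by
  subst hn
  by_contra hfree
  have hG : G.IsRainbowTriangleFree col := fun x y z hxy hyz hxz => by
    by_contra! h
    exact hfree ⟨x, y, z, hxy, hyz, hxz, h⟩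
  simp_rw [← edgeFinset_colorClass] at hsize
  have hcount := hG.two_mul_sum_sq_degree_add_le hsize
    (G.twenty_four_mul_card_edgeFinset_colorClass_add_le col hnum hsize)
  exact (six_mul_mul_lt_of_sq_le Fintype.card_pos hnum G.sq_two_mul_card_edgeFinset_le).not_ge
    hcount
end

section
/- Every edge-coloured complete graph on n ≥ 2 vertices without a rainbow triangle has a colour class of size at least n-1. -/
/-!
Some colour class spans a connected subgraph, which then has at least `n - 1` edges. This is
proved by adding the vertices one at a time. Suppose colour `i` connects the vertices `t` seen so
far and `v` is new. If some edge from `v` to `t` has colour `i`, colour `i` still connects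
`t ∪ {v}`. Otherwise, for every `i`-edge `xy` inside `t` the triangle `vxy` is not rainbow, so
`vx` and `vy` have the same colour; as the `i`-edges connect `t`, all edges from `v` to `t` share
one colour, and they form a spanning star of `t ∪ {v}`.
-/

open SimpleGraph Finset

section

variable {V ι α : Type*}

lemma SimpleGraph.Reachable.eq_of_forall_adj {G : SimpleGraph V} {f : V → α}
    (hf : ∀ ⦃a b⦄, G.Adj a b → f a = f b) {u v : V} (h : G.Reachable u v) : f u = f v := by
  rw [reachable_iff_reflTransGen] at h
  induction h with
  | refl => rfl
  | tail _ hab ih => exact ih.trans (hf hab)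

lemma SimpleGraph.connected_induce_of_forall_adj {G : SimpleGraph V} {s : Set V} {v : V}
    (hv : v ∈ s) (hadj : ∀ w ∈ s, w ≠ v → G.Adj v w) : (G.induce s).Connected := by
  refine (connected_iff_exists_forall_reachable _).mpr ⟨⟨v, hv⟩, fun ⟨w, hw⟩ => ?_⟩
  by_cases hwv : w = v
  · subst hwv
    rfl
  · exact Adj.reachable (hadj w hw hwv)

lemma SimpleGraph.connected_induce_insert {G : SimpleGraph V} {s : Set V} {v x : V}
    (hs : (G.induce s).Connected) (hx : x ∈ s) (hvx : G.Adj v x) :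
    (G.induce (insert v s)).Connected :=
  connected_induce_union
    (connected_induce_of_forall_adj (Set.mem_singleton v) (by simp)).preconnected
    hs.preconnected rfl hx hvx

def colorClassGraph (col : Sym2 V → ι) (i : ι) : SimpleGraph V := fromEdgeSet {e | col e = i}

def IsRainbowTriangle (col : Sym2 V → ι) (x y z : V) : Prop :=
  x ≠ y ∧ y ≠ z ∧ x ≠ z ∧
    col s(x, y) ≠ col s(y, z) ∧ col s(y, z) ≠ col s(x, z) ∧ col s(x, y) ≠ col s(x, z)

variable {col : Sym2 V → ι} {i : ι}

@[simp]
lemma colorClassGraph_adj {a b : V} :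
    (colorClassGraph col i).Adj a b ↔ col s(a, b) = i ∧ a ≠ b :=
  fromEdgeSet_adj _

lemma card_edgeSet_colorClassGraph [Fintype V] [DecidableEq V] [DecidableEq ι] :
    Nat.card (colorClassGraph col i).edgeSet =
      #(((⊤ : SimpleGraph V).edgeFinset).filter (fun e => col e = i)) := by
  have hedges : (colorClassGraph col i).edgeSet =
      ↑(((⊤ : SimpleGraph V).edgeFinset).filter (col · = i)) := by
    ext e
    simp [colorClassGraph, edgeSet_fromEdgeSet, and_comm]
  rw [hedges, Nat.card_coe_set_eq, Set.ncard_coe_finset]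

lemma color_eq_of_colorClassGraph_adj (hrb : ¬ ∃ x y z, IsRainbowTriangle col x y z)
    {v x y : V} (hxy : (colorClassGraph col i).Adj x y) (hvx : v ≠ x) (hvy : v ≠ y)
    (hx : col s(v, x) ≠ i) (hy : col s(v, y) ≠ i) : col s(v, x) = col s(v, y) := by
  rw [colorClassGraph_adj] at hxy
  by_contra hne
  exact hrb ⟨v, x, y, hvx, hxy.2, hvy, hxy.1 ▸ hx, hxy.1 ▸ hy.symm, hne⟩

theorem exists_connected_induce_colorClassGraph (hrb : ¬ ∃ x y z, IsRainbowTriangle col x y z)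
    {s : Finset V} (hs : s.Nonempty) :
    ∃ i, ((colorClassGraph col i).induce (s : Set V)).Connected := by
  induction hs using Finset.Nonempty.cons_induction with
  | singleton a =>
    exact ⟨col s(a, a), connected_induce_of_forall_adj (mem_singleton_self a) (by simp)⟩
  | cons v t hvt ht ih =>
    obtain ⟨i, hi⟩ := ih
    rw [coe_cons]
    by_cases hv : ∃ x ∈ t, col s(v, x) = i
    · obtain ⟨x, hxt, hvx⟩ := hv
      exact ⟨i, connected_induce_insert hi hxt ⟨hvx, ne_of_mem_of_not_mem hxt hvt |>.symm⟩⟩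
    · push Not at hv
      obtain ⟨x₀, hx₀⟩ := ht
      have hstar : ∀ x ∈ t, col s(v, x) = col s(v, x₀) := fun x hx =>
        (hi.preconnected ⟨x, hx⟩ ⟨x₀, hx₀⟩).eq_of_forall_adj
          (f := fun w : t => col s(v, w)) fun a b hab => color_eq_of_colorClassGraph_adj hrb hab
            (ne_of_mem_of_not_mem a.2 hvt).symm (ne_of_mem_of_not_mem b.2 hvt).symm
            (hv a a.2) (hv b b.2)
      refine ⟨col s(v, x₀), connected_induce_of_forall_adj (Set.mem_insert v _) ?_⟩
      rintro w (rfl | hw) hwv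
      · exact (hwv rfl).elim
      · exact ⟨hstar w hw, hwv.symm⟩

end

/-- Every edge-coloured complete graph on `n ≥ 2` vertices without a
rainbow triangle has a colour class of size at least `n - 1`. -/
theorem stmt4 {V : Type*} [Fintype V] [DecidableEq V] (hn : 2 ≤ Fintype.card V)
    {ι : Type*} [DecidableEq ι] (col : Sym2 V → ι)
    (hrb : ¬ ∃ x y z : V, x ≠ y ∧ y ≠ z ∧ x ≠ z ∧
      col s(x, y) ≠ col s(y, z) ∧ col s(y, z) ≠ col s(x, z) ∧ col s(x, y) ≠ col s(x, z)) :
    ∃ i : ι, Fintype.card V - 1 ≤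
      (((⊤ : SimpleGraph V).edgeFinset).filter (fun e => col e = i)).card := by
  have : Nonempty V := Fintype.card_pos_iff.mp (by omega)
  obtain ⟨i, hi⟩ := exists_connected_induce_colorClassGraph hrb univ_nonempty
  have hconn : (colorClassGraph col i).Connected := by
    rw [coe_univ] at hi
    exact (induceUnivIso _).connected_iff.mp hi
  refine ⟨i, ?_⟩
  have hcard := hconn.card_vert_le_card_edgeSet_add_one
  rw [Nat.card_eq_fintype_card, card_edgeSet_colorClassGraph] at hcard
  omega
end

section
/- Let G be an edge-coloured graph with all colour classes of size at most k and with no rainbow triangle. If W is a subset of the neighbourhood of some vertex w, then the number of edges of G with both endpoints in W is at most (k-1)|W|. -/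
/-!
Charge every edge `xy` inside `W ⊆ N(w)` to one of its endpoints `v`, together with an edge of
the colour of `wv` other than `wv`: to `(x, xy)` or `(y, xy)` if `xy` has the colour of `wx` or
of `wy`, and otherwise, the triangle `wxy` not being rainbow, to `(x, wy)`. Since `w ∉ W`, the
charge `(v, f)` determines the edge (it is `f` if `w ∉ f`, and `vy` if `f = wy`), so the number
of edges is at most `∑ v ∈ W, (|colour class of wv| - 1) ≤ (k - 1)|W|`.
-/

open Finset

namespace SimpleGraph

variable {V α : Type*} [Fintype V] [DecidableEq V] [DecidableEq α] (G : SimpleGraph V)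
  [DecidableRel G.Adj] (col : Sym2 V → α) (w : V)

def colourMates (v : V) : Finset (Sym2 V) :=
  {f ∈ G.edgeFinset | col f = col s(w, v)}.erase s(w, v)

lemma mem_colourMates {v : V} {f : Sym2 V} :
    f ∈ G.colourMates col w v ↔ f ≠ s(w, v) ∧ f ∈ G.edgeSet ∧ col f = col s(w, v) := by
  simp [colourMates]

lemma card_colourMates_le {k : ℕ} (hclass : ∀ i, #{e ∈ G.edgeFinset | col e = i} ≤ k) {v : V}
    (hv : G.Adj w v) : #(G.colourMates col w v) ≤ k - 1 := by
  rw [colourMates, card_erase_of_mem (by simpa using hv)]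
  exact Nat.sub_le_sub_right (hclass _) 1

/-- `ChargedTo w e ⟨v, f⟩`: the edge `e = vy` is charged to its endpoint `v`, paying with the
edge `f`, which is `e` itself or `wy`. -/
def ChargedTo (e : Sym2 V) (p : Σ _ : V, Sym2 V) : Prop :=
  ∃ y, e = s(p.1, y) ∧ (p.2 = e ∨ p.2 = s(w, y))

variable {G col w}

theorem card_edges_within_le_sum_card_colourMates {W : Finset V} (hW : ∀ v ∈ W, G.Adj w v)
    (hnr : ∀ x y, G.Adj w x → G.Adj w y → G.Adj x y →
      col s(x, y) = col s(w, x) ∨ col s(x, y) = col s(w, y) ∨ col s(w, x) = col s(w, y)) :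
    #{e ∈ G.edgeFinset | ∀ v ∈ e, v ∈ W} ≤ ∑ v ∈ W, #(G.colourMates col w v) := by
  have hw : ∀ e ∈ ({e ∈ G.edgeFinset | ∀ v ∈ e, v ∈ W} : Finset _), w ∉ e :=
    fun e he hwe => G.irrefl (hW w ((mem_filter.1 he).2 w hwe))
  rw [← card_sigma]
  refine card_le_card_of_forall_subsingleton (ChargedTo w) ?_ ?_
  · intro e he
    induction e using Sym2.ind with | _ x y => ?_
    have hne : ∀ v, s(x, y) ≠ s(w, v) := fun v h => hw _ he (h ▸ Sym2.mem_mk_left w v)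
    simp only [mem_filter, mem_edgeFinset, mem_edgeSet, Sym2.mem_iff, forall_eq_or_imp,
      forall_eq] at he
    obtain ⟨hxy, hx, hy⟩ := he
    rcases hnr x y (hW x hx) (hW y hy) hxy with h | h | h
    · exact ⟨⟨x, s(x, y)⟩, mem_sigma.2 ⟨hx, (G.mem_colourMates col w).2 ⟨hne x, hxy, h⟩⟩,
        y, rfl, .inl rfl⟩
    · exact ⟨⟨y, s(x, y)⟩, mem_sigma.2 ⟨hy, (G.mem_colourMates col w).2 ⟨hne y, hxy, h⟩⟩,
        x, Sym2.eq_swap, .inl rfl⟩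
    · have hne' : s(w, y) ≠ s(w, x) := fun h' => hxy.ne (Sym2.congr_right.1 h').symm
      exact ⟨⟨x, s(w, y)⟩, mem_sigma.2 ⟨hx, (G.mem_colourMates col w).2 ⟨hne', hW y hy, h.symm⟩⟩,
        y, rfl, .inr rfl⟩
  · rintro ⟨v, f⟩ - e₁ ⟨he₁, y₁, rfl, h₁⟩ e₂ ⟨he₂, y₂, rfl, h₂⟩
    dsimp only at h₁ h₂
    rcases h₁ with rfl | rfl <;> rcases h₂ with h₂ | h₂
    · exact h₂
    · exact absurd (h₂ ▸ Sym2.mem_mk_left w y₂) (hw _ he₁)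
    · exact absurd (h₂ ▸ Sym2.mem_mk_left w y₁) (hw _ he₂)
    · rw [Sym2.congr_right.1 h₂]

end SimpleGraph

/-- In an edge-coloured graph with all colour classes of size at most `k`
and no rainbow triangle, if `W` is a subset of the neighbourhood of a vertex `w`, then the
number of edges with both endpoints in `W` is at most `(k-1)·|W|`. -/
theorem stmt5 {V : Type*} [Fintype V] [DecidableEq V] (G : SimpleGraph V)
    [DecidableRel G.Adj] (k : ℕ) (col : Sym2 V → ℕ)
    (hclass : ∀ i : ℕ, (G.edgeFinset.filter (fun e => col e = i)).card ≤ k)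
    (hrb : ¬ ∃ x y z : V, G.Adj x y ∧ G.Adj y z ∧ G.Adj x z ∧
      col s(x, y) ≠ col s(y, z) ∧ col s(y, z) ≠ col s(x, z) ∧ col s(x, y) ≠ col s(x, z))
    (w : V) (W : Finset V) (hW : ∀ v ∈ W, G.Adj w v) :
    (G.edgeFinset.filter (fun e => ∀ v ∈ e, v ∈ W)).card ≤ (k - 1) * W.card := by
  have hnr : ∀ x y, G.Adj w x → G.Adj w y → G.Adj x y →
      col s(x, y) = col s(w, x) ∨ col s(x, y) = col s(w, y) ∨ col s(w, x) = col s(w, y) := by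
    intro x y hwx hwy hxy
    by_contra! h
    refine hrb ⟨x, w, y, hwx.symm, hwy, hxy, ?_, fun e => h.2.1 e.symm, ?_⟩ <;>
      rw [Sym2.eq_swap (a := x) (b := w)]
    exacts [h.2.2, fun e => h.1 e.symm]
  calc _ ≤ ∑ v ∈ W, #(G.colourMates col w v) :=
        SimpleGraph.card_edges_within_le_sum_card_colourMates hW hnr
    _ ≤ ∑ _v ∈ W, (k - 1) := sum_le_sum fun v hv => G.card_colourMates_le col w hclass (hW v hv)
    _ = (k - 1) * W.card := by rw [sum_const, smul_eq_mul, mul_comm]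
end

section
/- Let G be an edge-coloured complete graph on at least two vertices without a rainbow triangle. Then there is a partition P of the vertex set into at least two blocks such that: (1) for any two distinct blocks, all edges between them have the same colour, and (2) the set of edges joining distinct blocks uses at most two colours in total. -/
section GallaiAux

variable {V : Type*} {ι : Type*}

/-- No rainbow triangle, in positive (disjunction) form. -/
def NoRb (col : Sym2 V → ι) : Prop :=
  ∀ x y z : V, x ≠ y → y ≠ z → x ≠ z →
    (col s(x, y) = col s(y, z) ∨ col s(y, z) = col s(x, z) ∨ col s(x, y) = col s(x, z))

/-- Existence of a "Gallai equivalence relation": a nontrivial equivalence relation whose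
classes are pairwise joined monochromatically, using at most two colours overall. -/
def Good (col : Sym2 V → ι) : Prop :=
  ∃ r : V → V → Prop, Equivalence r ∧ (∃ x y, ¬ r x y) ∧
    (∀ x x' y y', r x x' → r y y' → ¬ r x y → col s(x, y) = col s(x', y')) ∧
    ∃ a b : ι, ∀ x y, ¬ r x y → (col s(x, y) = a ∨ col s(x, y) = b)

theorem NoRb.key {col : Sym2 V → ι} (h : NoRb col) {x y z : V} (hxy : x ≠ y) (hyz : y ≠ z)
    (hxz : x ≠ z) (hne : col s(x, y) ≠ col s(x, z)) :
    col s(y, z) = col s(x, y) ∨ col s(y, z) = col s(x, z) := by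
  rcases h x y z hxy hyz hxz with h1 | h1 | h1
  · exact Or.inl h1.symm
  · exact Or.inr h1
  · exact absurd h1 hne

/-- From a cut all of whose edges use at most two colours, build a Gallai equivalence
relation: take the connected components of the graph of edges coloured outside `{a, b}`. -/
theorem cutToGood {col : Sym2 V → ι} (hnr : NoRb col) (A : Set V) (a b : ι)
    (x₀ : V) (hx₀ : x₀ ∈ A) (y₀ : V) (hy₀ : y₀ ∉ A)
    (hcut : ∀ x ∈ A, ∀ y ∉ A, col s(x, y) = a ∨ col s(x, y) = b) : Good col := by
  have hsw : ∀ x y : V, col s(x, y) = col s(y, x) := fun x y => by rw [Sym2.eq_swap]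
  set Adj : V → V → Prop := fun u w => u ≠ w ∧ ¬(col s(u, w) = a ∨ col s(u, w) = b) with hAdjdef
  have hAdjSymm : ∀ {u w}, Adj u w → Adj w u := by
    rintro u w ⟨h1, h2⟩
    exact ⟨h1.symm, by rwa [← hsw u w]⟩
  set r : V → V → Prop := Relation.ReflTransGen Adj with hrdef
  have rsymm : ∀ {u w}, r u w → r w u := by
    intro u w h
    induction h with
    | refl => exact Relation.ReflTransGen.refl
    | tail _ hbc ih => exact Relation.ReflTransGen.head (hAdjSymm hbc) ih
  have hEq : Equivalence r :=
    ⟨fun _ => Relation.ReflTransGen.refl, rsymm, Relation.ReflTransGen.trans⟩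
  -- components never cross the cut
  have hinv : ∀ {u w}, r u w → (u ∈ A ↔ w ∈ A) := by
    intro u w h
    induction h with
    | refl => exact Iff.rfl
    | tail _ hbc ih =>
      rename_i bb cc _
      refine ih.trans ⟨fun hb => ?_, fun hc => ?_⟩
      · by_contra hc; exact hbc.2 (hcut _ hb _ hc)
      · by_contra hb
        have h2 := hcut _ hc _ hb
        exact (hAdjSymm hbc).2 h2
  have cross : ∀ {x y}, ¬ r x y → (col s(x, y) = a ∨ col s(x, y) = b) := by
    intro x y h
    by_contra hc
    rcases eq_or_ne x y with rfl | hne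
    · exact h Relation.ReflTransGen.refl
    · exact h (Relation.ReflTransGen.single ⟨hne, hc⟩)
  have L1 : ∀ x y y', ¬ r x y → r y y' → col s(x, y') = col s(x, y) := by
    intro x y y' hxy h
    induction h with
    | refl => rfl
    | tail hyb hbc ih =>
      rename_i bb cc
      have hxb : ¬ r x bb := fun hh => hxy (hh.trans (rsymm hyb))
      have hxc : ¬ r x cc := fun hh => hxy (hh.trans (rsymm (hyb.tail hbc)))
      have e1 := cross hxb
      have e2 := cross hxc
      rcases eq_or_ne (col s(x, cc)) (col s(x, bb)) with he | he
      · rw [he, ih]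
      · exfalso
        have hxbne : x ≠ bb := fun e => hxb (e ▸ Relation.ReflTransGen.refl)
        have hxcne : x ≠ cc := fun e => hxc (e ▸ Relation.ReflTransGen.refl)
        rcases hnr.key hxbne hbc.1 hxcne (fun e => he e.symm) with h' | h'
        · exact hbc.2 (by rw [h']; exact e1)
        · exact hbc.2 (by rw [h']; exact e2)
  refine ⟨r, hEq, ⟨x₀, y₀, fun h => hy₀ ((hinv h).mp hx₀)⟩, ?_, a, b, fun x y h => cross h⟩
  intro x x' y y' hxx' hyy' hxy
  have h1 : col s(x, y') = col s(x, y) := L1 x y y' hxy hyy'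
  have hxy' : ¬ r x y' := fun h => hxy (h.trans (rsymm hyy'))
  have hy'x : ¬ r y' x := fun h => hxy' (rsymm h)
  have h2 : col s(y', x') = col s(y', x) := L1 y' x x' hy'x hxx'
  rw [← h1, hsw x y', ← h2, hsw y' x']

end GallaiAux

section GallaiInduction

universe u v

theorem gallai_aux {ι : Type v} (n : ℕ) : ∀ (V : Type u) [Fintype V],
    Fintype.card V = n → 2 ≤ Fintype.card V → ∀ col : Sym2 V → ι, NoRb col → Good col := by
  induction n using Nat.strong_induction_on with
  | _ n IH =>
  intro V _ hcard h2 col hnr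
  haveI := Classical.decEq V
  have hsw : ∀ x y : V, col s(x, y) = col s(y, x) := fun x y => by rw [Sym2.eq_swap]
  have tri : ∀ z x y : V, z ≠ x → z ≠ y → x ≠ y → col s(z, x) ≠ col s(z, y) →
      (col s(x, y) = col s(z, x) ∨ col s(x, y) = col s(z, y)) :=
    fun z x y h1 h2 h3 h4 => hnr.key h1 h3 h2 h4
  by_cases hn3 : 3 ≤ Fintype.card V
  case neg =>
    -- base case: exactly two vertices
    have hc2 : Fintype.card V = 2 := le_antisymm (by omega) h2
    obtain ⟨x, y, hxy⟩ := Fintype.exists_pair_of_one_lt_card (α := V) (by omega)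
    have huniv : ({x, y} : Finset V) = Finset.univ := by
      apply Finset.eq_univ_of_card
      rw [hc2, Finset.card_insert_of_notMem (by simp [hxy]), Finset.card_singleton]
    have hall : ∀ z : V, z = x ∨ z = y := by
      intro z
      have : z ∈ ({x, y} : Finset V) := huniv ▸ Finset.mem_univ z
      simpa using this
    refine cutToGood hnr {x} (col s(x, y)) (col s(x, y)) x rfl y
      (fun h => hxy (Set.mem_singleton_iff.mp h).symm) ?_
    intro u hu w hw
    have hu' : u = x := hu
    subst hu'
    rcases hall w with rfl | rfl
    · exact absurd rfl hw
    · exact Or.inl rfl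
  case pos =>
    have hne : Nonempty V := Fintype.card_pos_iff.mp (by omega)
    obtain ⟨v⟩ := hne
    set V' := {u : V // u ≠ v} with hV'
    have hcard' : Fintype.card V' = Fintype.card V - 1 := by
      rw [show (Fintype.card V' : ℕ) = (Finset.univ.filter fun u : V => u ≠ v).card from
        Fintype.card_subtype _]
      rw [show (Finset.univ.filter fun u : V => u ≠ v) = Finset.univ.erase v from by
        ext u; simp [Finset.mem_erase]]
      rw [Finset.card_erase_of_mem (Finset.mem_univ v), Finset.card_univ]
    have hV'lt : Fintype.card V' < n := by omega
    have hV'2 : 2 ≤ Fintype.card V' := by omega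
    set col' : Sym2 V' → ι := fun p => col (Sym2.map Subtype.val p) with hcol'def
    have hcol' : ∀ x y : V', col' s(x, y) = col s(↑x, ↑y) := fun x y => by
      simp [hcol'def]
    have hnr' : NoRb col' := by
      intro x y z hxy hyz hxz
      rw [hcol', hcol', hcol']
      exact hnr _ _ _ (Subtype.coe_ne_coe.mpr hxy) (Subtype.coe_ne_coe.mpr hyz)
        (Subtype.coe_ne_coe.mpr hxz)
    obtain ⟨r', hEq, ⟨p₀, q₀, hpq⟩, hmono', ⟨c₁, c₂, hcross'⟩⟩ :=
      IH (Fintype.card V') hV'lt V' rfl hV'2 col' hnr'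
    have hmono : ∀ x x' y y' : V', r' x x' → r' y y' → ¬ r' x y →
        col s(↑x, ↑y) = col s(↑x', ↑y') := by
      intro x x' y y' h1 h2 h3
      have h := hmono' x x' y y' h1 h2 h3
      rwa [hcol', hcol'] at h
    have hcross : ∀ x y : V', ¬ r' x y → (col s(↑x, ↑y) = c₁ ∨ col s(↑x, ↑y) = c₂) := by
      intro x y h
      have h' := hcross' x y h
      rwa [hcol'] at h'
    have hcoe : ∀ x : V', (↑x : V) ≠ v := fun x => x.prop
    by_cases hmix : ∃ y₁ y₂ : V', r' y₁ y₂ ∧ col s(v, ↑y₁) ≠ col s(v, ↑y₂)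
    · -- Case II : some class is seen by v in at least two colours
      obtain ⟨y₁, y₂, hr12, hne12⟩ := hmix
      by_cases hIIa : ∀ z : V', ¬ r' z y₁ → col s(v, ↑z) = col s(↑y₁, ↑z)
      · -- cut: {v} ∪ class(y₁) against the rest, colours c₁, c₂
        obtain ⟨zb, hzb⟩ : ∃ z : V', ¬ r' z y₁ := by
          by_contra h
          push_neg at h
          exact hpq (hEq.trans (h p₀) (hEq.symm (h q₀)))
        refine cutToGood hnr {u : V | u = v ∨ ∃ h : u ≠ v, r' ⟨u, h⟩ y₁} c₁ c₂
          v (Or.inl rfl) (↑zb) ?_ ?_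
        · rintro (h | ⟨h, hr⟩)
          · exact hcoe zb h
          · exact hzb (by simpa using hr)
        · intro u hu w hw
          have hwv : w ≠ v := fun e => hw (Or.inl e)
          have hwr : ¬ r' ⟨w, hwv⟩ y₁ := fun hr => hw (Or.inr ⟨hwv, hr⟩)
          rcases hu with rfl | ⟨huv, hur⟩
          · have h1 : col s(u, w) = col s(↑y₁, w) := hIIa ⟨w, hwv⟩ hwr
            rw [h1]
            exact hcross y₁ ⟨w, hwv⟩ (fun h => hwr (hEq.symm h))
          · have hn : ¬ r' ⟨u, huv⟩ ⟨w, hwv⟩ := fun h => hwr (hEq.trans (hEq.symm h) hur)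
            exact hcross ⟨u, huv⟩ ⟨w, hwv⟩ hn
      · -- Case II.b : some outside vertex z₀ with col(v,z₀) ≠ cross colour
        push_neg at hIIa
        obtain ⟨z₀, hz₀r, hz₀ne⟩ := hIIa
        set g := col s(v, ↑z₀) with hgdef
        set f₀ := col s(↑y₁, ↑z₀) with hf₀def
        have hgf : g ≠ f₀ := hz₀ne
        -- every vertex of the class of y₁ is seen by v in colour g or f₀
        have hB : ∀ x : V', r' x y₁ → (col s(v, ↑x) = g ∨ col s(v, ↑x) = f₀) := by
          intro x hx
          have hxz : ¬ r' x z₀ := fun h => hz₀r (hEq.trans (hEq.symm h) hx)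
          have hxzne : (↑x : V) ≠ ↑z₀ :=
            Subtype.coe_ne_coe.mpr (fun e => hxz (e ▸ hEq.refl x))
          have hcolxz : col s(↑x, ↑z₀) = f₀ := hmono x y₁ z₀ z₀ hx (hEq.refl z₀) hxz
          have hne' : col s(↑z₀, v) ≠ col s(↑z₀, ↑x) := by
            rw [← hsw v ↑z₀, ← hsw ↑x ↑z₀, hcolxz]
            exact hgf
          rcases tri ↑z₀ v ↑x (hcoe z₀) hxzne.symm (Ne.symm (hcoe x)) hne' with h | h
          · left; rw [h, ← hsw v ↑z₀]
          · right; rw [h, ← hsw ↑x ↑z₀, hcolxz]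
        -- pick representatives of both colours in the class of y₁
        have hBy₁ := hB y₁ (hEq.refl y₁)
        have hBy₂ := hB y₂ (hEq.symm hr12)
        obtain ⟨x_g, hx_gr, hx_g, x_f, hx_fr, hx_f⟩ :
            ∃ x_g, r' x_g y₁ ∧ col s(v, ↑x_g) = g ∧
              ∃ x_f, r' x_f y₁ ∧ col s(v, ↑x_f) = f₀ := by
          rcases hBy₁ with h1 | h1 <;> rcases hBy₂ with h2 | h2
          · exact absurd (h1.trans h2.symm) hne12
          · exact ⟨y₁, hEq.refl y₁, h1, y₂, hEq.symm hr12, h2⟩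
          · exact ⟨y₂, hEq.symm hr12, h2, y₁, hEq.refl y₁, h1⟩
          · exact absurd (h1.trans h2.symm) hne12
        -- outside vertices: triangle with x_g resp. x_f
        have houtg : ∀ z : V', ¬ r' z y₁ → col s(↑y₁, ↑z) ≠ g →
            (col s(v, ↑z) = g ∨ col s(v, ↑z) = col s(↑y₁, ↑z)) := by
          intro z hz hfz
          have hxz : ¬ r' x_g z := fun h => hz (hEq.trans (hEq.symm h) hx_gr)
          have hxzne : (↑x_g : V) ≠ ↑z :=
            Subtype.coe_ne_coe.mpr (fun e => hxz (e ▸ hEq.refl x_g))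
          have hcolxz : col s(↑x_g, ↑z) = col s(↑y₁, ↑z) :=
            hmono x_g y₁ z z hx_gr (hEq.refl z) hxz
          have hne' : col s(↑x_g, v) ≠ col s(↑x_g, ↑z) := by
            rw [← hsw v ↑x_g, hx_g, hcolxz]
            exact fun e => hfz e.symm
          rcases tri ↑x_g v ↑z (hcoe x_g) hxzne (Ne.symm (hcoe z)) hne' with h | h
          · left; rw [h, ← hsw v ↑x_g, hx_g]
          · right; rw [h, hcolxz]
        have houtf : ∀ z : V', ¬ r' z y₁ → col s(↑y₁, ↑z) ≠ f₀ →
            (col s(v, ↑z) = f₀ ∨ col s(v, ↑z) = col s(↑y₁, ↑z)) := by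
          intro z hz hfz
          have hxz : ¬ r' x_f z := fun h => hz (hEq.trans (hEq.symm h) hx_fr)
          have hxzne : (↑x_f : V) ≠ ↑z :=
            Subtype.coe_ne_coe.mpr (fun e => hxz (e ▸ hEq.refl x_f))
          have hcolxz : col s(↑x_f, ↑z) = col s(↑y₁, ↑z) :=
            hmono x_f y₁ z z hx_fr (hEq.refl z) hxz
          have hne' : col s(↑x_f, v) ≠ col s(↑x_f, ↑z) := by
            rw [← hsw v ↑x_f, hx_f, hcolxz]
            exact fun e => hfz e.symm
          rcases tri ↑x_f v ↑z (hcoe x_f) hxzne (Ne.symm (hcoe z)) hne' with h | h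
          · left; rw [h, ← hsw v ↑x_f, hx_f]
          · right; rw [h, hcolxz]
        have hout1 : ∀ z : V', ¬ r' z y₁ → col s(↑y₁, ↑z) ≠ g → col s(↑y₁, ↑z) ≠ f₀ →
            col s(v, ↑z) = col s(↑y₁, ↑z) := by
          intro z hz h1 h2
          rcases houtg z hz h1 with h | h
          · rcases houtf z hz h2 with h' | h'
            · exact absurd (h.symm.trans h') hgf
            · exact h'
          · exact h
        have hout2 : ∀ z : V', ¬ r' z y₁ →
            (col s(↑y₁, ↑z) = g ∨ col s(↑y₁, ↑z) = f₀) →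
            (col s(v, ↑z) = g ∨ col s(v, ↑z) = f₀) := by
          intro z hz hf
          rcases hf with hf | hf
          · rcases houtf z hz (by rw [hf]; exact hgf) with h | h
            · exact Or.inr h
            · exact Or.inl (h.trans hf)
          · rcases houtg z hz (by rw [hf]; exact hgf.symm) with h | h
            · exact Or.inl h
            · exact Or.inr (h.trans hf)
        by_cases hQ : ∃ w : V', ¬ r' w y₁ ∧ col s(↑y₁, ↑w) ≠ g ∧ col s(↑y₁, ↑w) ≠ f₀
        · -- cut: complement of Q against Q, colours c₁, c₂
          obtain ⟨w₀, hw₀r, hw₀g, hw₀f⟩ := hQ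
          refine cutToGood hnr
            {u : V | ¬ ∃ h : u ≠ v, ¬ r' ⟨u, h⟩ y₁ ∧ col s(↑y₁, u) ≠ g ∧ col s(↑y₁, u) ≠ f₀}
            c₁ c₂ v ?_ (↑w₀) ?_ ?_
          · rintro ⟨h, _⟩; exact h rfl
          · intro hcon
            exact hcon ⟨hcoe w₀, hw₀r, hw₀g, hw₀f⟩
          · intro u hu w hw
            have hw' := not_not.mp hw
            obtain ⟨hwv, hwr, hwg, hwf⟩ := hw'
            rcases eq_or_ne u v with rfl | huv
            · have h1 : col s(u, w) = col s(↑y₁, w) := hout1 ⟨w, hwv⟩ hwr hwg hwf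
              rw [h1]
              exact hcross y₁ ⟨w, hwv⟩ (fun h => hwr (hEq.symm h))
            · have hur : ¬ r' ⟨u, huv⟩ ⟨w, hwv⟩ := by
                intro h
                apply hu
                refine ⟨huv, fun hy => hwr (hEq.trans (hEq.symm h) hy), ?_, ?_⟩
                · have he : col s(↑y₁, u) = col s(↑y₁, w) :=
                    hmono y₁ y₁ ⟨u, huv⟩ ⟨w, hwv⟩ (hEq.refl y₁) h
                      (fun hy => hwr (hEq.trans (hEq.symm h) (hEq.symm hy)))
                  rw [he]; exact hwg
                · have he : col s(↑y₁, u) = col s(↑y₁, w) :=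
                    hmono y₁ y₁ ⟨u, huv⟩ ⟨w, hwv⟩ (hEq.refl y₁) h
                      (fun hy => hwr (hEq.trans (hEq.symm h) (hEq.symm hy)))
                  rw [he]; exact hwf
              exact hcross ⟨u, huv⟩ ⟨w, hwv⟩ hur
        · -- all edges at v use colours g, f₀ only: cut {v} against the rest
          push_neg at hQ
          refine cutToGood hnr {v} g f₀ v rfl (↑y₁) (fun h => hcoe y₁ h) ?_
          intro u hu w hw
          have huv : u = v := hu
          rw [huv]
          have hwv : w ≠ v := hw
          by_cases hwr : r' ⟨w, hwv⟩ y₁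
          · exact hB ⟨w, hwv⟩ hwr
          · apply hout2 ⟨w, hwv⟩ hwr
            by_cases hcg : col s(↑y₁, w) = g
            · exact Or.inl hcg
            · exact Or.inr (hQ ⟨w, hwv⟩ hwr hcg)
    · -- Case I : v sees every class monochromatically
      push_neg at hmix
      have hI : ∀ y₁ y₂ : V', r' y₁ y₂ → col s(v, ↑y₁) = col s(v, ↑y₂) := hmix
      by_cases hd : ∃ y₀ : V', col s(v, ↑y₀) ≠ c₁ ∧ col s(v, ↑y₀) ≠ c₂
      · obtain ⟨w₀, hw₀1, hw₀2⟩ := hd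
        set d := col s(v, ↑w₀) with hddef
        have hT : ∀ u : V', col s(v, ↑u) ≠ d → col s(v, ↑u) = col s(↑w₀, ↑u) := by
          intro u hu
          have hru : ¬ r' u w₀ := fun h => hu (hI u w₀ h)
          have hwu : (col s(↑w₀, ↑u) = c₁ ∨ col s(↑w₀, ↑u) = c₂) :=
            hcross w₀ u (fun h => hru (hEq.symm h))
          have hwune : (↑w₀ : V) ≠ ↑u :=
            Subtype.coe_ne_coe.mpr (fun e => hu (by rw [← e]))
          have hne0 : col s(v, ↑w₀) ≠ col s(v, ↑u) := fun e => hu e.symm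
          rcases tri v ↑w₀ ↑u (Ne.symm (hcoe w₀)) (Ne.symm (hcoe u)) hwune hne0 with h | h
          · exfalso
            rcases hwu with hc | hc
            · exact hw₀1 (h.symm.trans hc)
            · exact hw₀2 (h.symm.trans hc)
          · exact h.symm
        by_cases hall : ∀ u : V', col s(v, ↑u) = d
        · refine cutToGood hnr {v} d d v rfl (↑w₀) (fun h => hcoe w₀ h) ?_
          intro u hu w hw
          have huv : u = v := hu
          rw [huv]
          have hwv : w ≠ v := hw
          exact Or.inl (hall ⟨w, hwv⟩)
        · push_neg at hall
          obtain ⟨u₀, hu₀⟩ := hall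
          refine cutToGood hnr {u : V | u = v ∨ col s(v, u) = d} c₁ c₂ v (Or.inl rfl)
            (↑u₀) ?_ ?_
          · rintro (h | h)
            · exact hcoe u₀ h
            · exact hu₀ h
          · intro u hu w hw
            have hwv : w ≠ v := fun e => hw (Or.inl e)
            have hwd : col s(v, w) ≠ d := fun e => hw (Or.inr e)
            rcases eq_or_ne u v with rfl | huv
            · have h1 := hT ⟨w, hwv⟩ hwd
              rw [h1]
              refine hcross w₀ ⟨w, hwv⟩ (fun h => ?_)
              exact hwd (hI ⟨w, hwv⟩ w₀ (hEq.symm h))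
            · have hud : col s(v, u) = d := (hu.resolve_left huv)
              have hn : ¬ r' ⟨u, huv⟩ ⟨w, hwv⟩ := fun h =>
                hwd ((hI ⟨u, huv⟩ ⟨w, hwv⟩ h).symm.trans hud)
              exact hcross ⟨u, huv⟩ ⟨w, hwv⟩ hn
      · -- all edges at v use colours c₁, c₂
        push_neg at hd
        refine cutToGood hnr {v} c₁ c₂ v rfl (↑p₀) (fun h => hcoe p₀ h) ?_
        intro u hu w hw
        have huv : u = v := hu
        rw [huv]
        have hwv : w ≠ v := hw
        by_cases h1 : col s(v, w) = c₁
        · exact Or.inl h1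
        · exact Or.inr (hd ⟨w, hwv⟩ h1)

end GallaiInduction

/-- Gallai. An edge-coloured complete graph on at least two vertices with
no rainbow triangle admits a nontrivial vertex partition such that edges between any two
fixed distinct blocks are monochromatic, and all edges between distinct blocks use at most
two colours in total. -/
theorem stmt6 {V : Type*} [Fintype V] [DecidableEq V] (hn : 2 ≤ Fintype.card V)
    {ι : Type*} (col : Sym2 V → ι)
    (hrb : ¬ ∃ x y z : V, x ≠ y ∧ y ≠ z ∧ x ≠ z ∧
      col s(x, y) ≠ col s(y, z) ∧ col s(y, z) ≠ col s(x, z) ∧ col s(x, y) ≠ col s(x, z)) :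
    ∃ P : Finpartition (Finset.univ : Finset V), 2 ≤ P.parts.card ∧
      (∀ p ∈ P.parts, ∀ q ∈ P.parts, p ≠ q →
        ∃ c : ι, ∀ x ∈ p, ∀ y ∈ q, col s(x, y) = c) ∧
      (∃ c₁ c₂ : ι, ∀ p ∈ P.parts, ∀ q ∈ P.parts, p ≠ q →
        ∀ x ∈ p, ∀ y ∈ q, col s(x, y) = c₁ ∨ col s(x, y) = c₂) := by
  classical
  have hnr : NoRb col := by
    intro x y z h1 h2 h3
    by_contra hcon
    push_neg at hcon
    exact hrb ⟨x, y, z, h1, h2, h3, hcon.1, hcon.2.1, hcon.2.2⟩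
  obtain ⟨r, hEq, ⟨p₀, q₀, hpq⟩, hmono, a, b, hcross⟩ :=
    gallai_aux (Fintype.card V) V rfl hn col hnr
  haveI : DecidableRel r := fun _ _ => Classical.dec _
  set cls : V → Finset V := fun x => Finset.univ.filter (fun y => r x y) with hclsdef
  have hmem : ∀ x y : V, y ∈ cls x ↔ r x y := by
    intro x y; simp [hclsdef]
  have hself : ∀ x, x ∈ cls x := fun x => (hmem x x).mpr (hEq.refl x)
  have hclsEq : ∀ {x y}, r x y → cls x = cls y := by
    intro x y h
    ext z
    rw [hmem, hmem]
    exact ⟨fun hz => hEq.trans (hEq.symm h) hz, fun hz => hEq.trans h hz⟩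
  have hclsrel : ∀ {x y}, cls x = cls y → r x y := by
    intro x y h
    exact (hmem x y).mp (by rw [h]; exact hself y)
  refine ⟨⟨Finset.univ.image cls, ?_, ?_, ?_⟩, ?_, ?_, ?_⟩
  · apply Finset.supIndep_iff_pairwiseDisjoint.mpr
    intro s hs t ht hst
    obtain ⟨x, -, rfl⟩ := Finset.mem_image.mp (Finset.mem_coe.mp hs)
    obtain ⟨y, -, rfl⟩ := Finset.mem_image.mp (Finset.mem_coe.mp ht)
    rw [Function.onFun, id, id, Finset.disjoint_left]
    intro z hzx hzy
    rw [hmem] at hzx hzy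
    exact hst (hclsEq (hEq.trans hzx (hEq.symm hzy)))
  · refine Finset.ext fun z => ⟨fun _ => Finset.mem_univ z, fun _ => ?_⟩
    rw [Finset.mem_sup]
    exact ⟨cls z, Finset.mem_image_of_mem _ (Finset.mem_univ z), hself z⟩
  · intro h
    simp only [Finset.bot_eq_empty, Finset.mem_image] at h
    obtain ⟨x, _, hx⟩ := h
    have : x ∈ (∅ : Finset V) := hx ▸ hself x
    exact absurd this (Finset.notMem_empty x)
  · apply Finset.one_lt_card.mpr
    refine ⟨cls p₀, Finset.mem_image_of_mem _ (Finset.mem_univ _), cls q₀,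
      Finset.mem_image_of_mem _ (Finset.mem_univ _), fun h => hpq (hclsrel h)⟩
  · intro p hp q hq hpqne
    simp only [Finset.mem_image] at hp hq
    obtain ⟨x, _, rfl⟩ := hp
    obtain ⟨y, _, rfl⟩ := hq
    have hxy : ¬ r x y := fun h => hpqne (hclsEq h)
    refine ⟨col s(x, y), fun u hu w hw => ?_⟩
    rw [hmem] at hu hw
    exact (hmono x u y w hu hw hxy).symm
  · refine ⟨a, b, fun p hp q hq hpqne u hu w hw => ?_⟩
    simp only [Finset.mem_image] at hp hq
    obtain ⟨x, _, rfl⟩ := hp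
    obtain ⟨y, _, rfl⟩ := hq
    rw [hmem] at hu hw
    have hn : ¬ r u w := fun h =>
      hpqne (hclsEq (hEq.trans hu (hEq.trans h (hEq.symm hw))))
    exact hcross u w hn
end

section
/- There exists an edge-coloured graph on 5 vertices with 8 edges in which every colour class has size at most 2 and there is no rainbow triangle. -/
/-- Edge set of the wheel W_5 on Fin 5 (hub 4, rim 0,1,2,3). -/
def W5E : Finset (Sym2 (Fin 5)) :=
  {s(0,1), s(1,2), s(2,3), s(3,0), s(0,4), s(1,4), s(2,4), s(3,4)}

/-- The colouring: edge {i,4} and {i,i+1} get colour i (with {3,0} getting 3). -/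
def W5col : Sym2 (Fin 5) → ℕ :=
  Sym2.lift ⟨fun a b =>
    if max a b = 4 then (min a b : ℕ)
    else if min a b = 0 ∧ max a b = 3 then 3 else (min a b : ℕ),
    by intro a b; simp [min_comm, max_comm]⟩

lemma W5col_le (e : Sym2 (Fin 5)) (he : e ∈ W5E) : W5col e ≤ 3 := by
  fin_cases he <;> decide

lemma W5_filter_card (i : ℕ) : (W5E.filter (fun e => W5col e = i)).card ≤ 2 := by
  rcases lt_or_ge i 4 with hi | hi
  · interval_cases i <;> decide
  · have : W5E.filter (fun e => W5col e = i) = ∅ := by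
      rw [Finset.filter_eq_empty_iff]
      intro e he hc
      exact absurd (hc ▸ W5col_le e he) (by omega)
    simp [this]

/-- There is an edge-coloured graph on 5 vertices with 8 edges, all colour
classes of size at most 2, and no rainbow triangle. -/
theorem stmt8 : ∃ (G : SimpleGraph (Fin 5)) (col : Sym2 (Fin 5) → ℕ),
    G.edgeSet.ncard = 8 ∧
    (∀ i : ℕ, {e | e ∈ G.edgeSet ∧ col e = i}.ncard ≤ 2) ∧
    ¬ ∃ x y z : Fin 5, G.Adj x y ∧ G.Adj y z ∧ G.Adj x z ∧
      col s(x, y) ≠ col s(y, z) ∧ col s(y, z) ≠ col s(x, z) ∧ col s(x, y) ≠ col s(x, z) := by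
  refine ⟨SimpleGraph.fromEdgeSet ↑W5E, W5col, ?_, ?_, ?_⟩
  · have hE : (SimpleGraph.fromEdgeSet (↑W5E : Set (Sym2 (Fin 5)))).edgeSet = ↑W5E := by
      rw [SimpleGraph.edgeSet_fromEdgeSet, sdiff_eq_left]
      refine Set.disjoint_left.mpr fun e he hd => ?_
      have he' : e ∈ W5E := he
      have hd' : e.IsDiag := hd
      fin_cases he' <;> exact absurd hd' (by decide)
    rw [hE, Set.ncard_coe_finset]
    decide
  · intro i
    have hE : (SimpleGraph.fromEdgeSet (↑W5E : Set (Sym2 (Fin 5)))).edgeSet ⊆ ↑W5E := by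
      rw [SimpleGraph.edgeSet_fromEdgeSet]; exact Set.diff_subset
    have hsub : {e | e ∈ (SimpleGraph.fromEdgeSet (↑W5E : Set (Sym2 (Fin 5)))).edgeSet ∧
        W5col e = i} ⊆ ↑(W5E.filter (fun e => W5col e = i)) := by
      intro e ⟨he, hc⟩
      simp only [Finset.coe_filter, Set.mem_setOf_eq]
      exact ⟨hE he, hc⟩
    calc {e | e ∈ (SimpleGraph.fromEdgeSet (↑W5E : Set (Sym2 (Fin 5)))).edgeSet ∧
        W5col e = i}.ncard
        ≤ (↑(W5E.filter (fun e => W5col e = i)) : Set (Sym2 (Fin 5))).ncard :=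
          Set.ncard_le_ncard hsub (Finset.finite_toSet _)
      _ = (W5E.filter (fun e => W5col e = i)).card := Set.ncard_coe_finset _
      _ ≤ 2 := W5_filter_card i
  · rintro ⟨x, y, z, hxy, hyz, hxz, h1, h2, h3⟩
    rw [SimpleGraph.fromEdgeSet_adj] at hxy hyz hxz
    revert h1 h2 h3
    have hxy' := hxy.1; have hyz' := hyz.1; have hxz' := hxz.1
    revert hxy' hyz' hxz'
    revert x y z
    decide
end

section
/- For every k ≥ 2 and n = 3k-1, there exists an edge-coloured graph on n vertices with 3k^2 - 2k edges, all colour classes of size exactly k, and no rainbow triangle. -/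
/-!
Orient the edges `v_i → v_{i+j}` (`1 ≤ j ≤ k - 1`) and `v_i → z`. Then every edge is coloured
by its tail, the colour class `C_i` is the out-neighbourhood of `v_i`, and a rainbow triangle has
three distinct tails, i.e. it is a directed triangle. Along a directed triangle on the cycle the
three steps lie in `[1, k - 1]` and sum to a positive multiple of `3k - 2`, which exceeds
`3(k - 1)`.
-/

open SimpleGraph

section TailColouring

variable {V : Type*} (r : V → V → Prop)

lemma exists_tail_colouring (hr : ∀ x y, r x y → ¬ r y x) (φ : V → ℕ) :
    ∃ col : Sym2 V → ℕ, ∀ x y, r x y → col s(x, y) = φ x := by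
  classical
  refine ⟨Sym2.lift ⟨fun x y => if r x y then φ x else if r y x then φ y else 0, fun x y => ?_⟩,
    fun x y h => by simp [h]⟩
  by_cases hxy : r x y
  · simp [hxy, hr x y hxy]
  · simp [hxy]

lemma exists_rel_of_mem_edgeSet_fromRel {e : Sym2 V} (he : e ∈ (fromRel r).edgeSet) :
    ∃ x y, r x y ∧ s(x, y) = e := by
  induction e using Sym2.ind with
  | _ x y =>
    obtain ⟨-, hxy | hyx⟩ := he
    exacts [⟨x, y, hxy, rfl⟩, ⟨y, x, hyx, Sym2.eq_swap⟩]

lemma mem_edgeSet_fromRel_of_rel (hr : ∀ x y, r x y → ¬ r y x) {x y : V} (h : r x y) :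
    s(x, y) ∈ (fromRel r).edgeSet :=
  (fromRel_adj r x y).mpr ⟨by rintro rfl; exact hr x x h h, Or.inl h⟩

lemma ncard_edgeSet_fromRel (hr : ∀ x y, r x y → ¬ r y x) :
    (fromRel r).edgeSet.ncard = {p : V × V | r p.1 p.2}.ncard := by
  symm
  refine Set.ncard_congr (fun p _ => s(p.1, p.2)) (fun p hp => mem_edgeSet_fromRel_of_rel r hr hp)
    ?_ (fun e he => ?_)
  · rintro ⟨x, y⟩ ⟨x', y'⟩ h h' hxy
    rcases Sym2.eq_iff.mp hxy with ⟨rfl, rfl⟩ | ⟨rfl, rfl⟩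
    · rfl
    · exact (hr _ _ h h').elim
  · obtain ⟨x, y, hxy, rfl⟩ := exists_rel_of_mem_edgeSet_fromRel r he
    exact ⟨(x, y), hxy, rfl⟩

lemma ncard_setOf_rel_eq_sum [Fintype V] :
    {p : V × V | r p.1 p.2}.ncard = ∑ v, {w | r v w}.ncard := by
  classical
  simp only [Set.ncard_eq_toFinset_card', Set.toFinset_ofPred, Finset.card_filter,
    Fintype.sum_prod_type]

lemma not_exists_rainbow_triangle_fromRel (col : Sym2 V → ℕ) (φ : V → ℕ)
    (hcol : ∀ x y, r x y → col s(x, y) = φ x)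
    (hcyc : ∀ x y z, r x y → r y z → ¬ r z x) :
    ¬ ∃ x y z, (fromRel r).Adj x y ∧ (fromRel r).Adj y z ∧ (fromRel r).Adj x z ∧
      col s(x, y) ≠ col s(y, z) ∧ col s(y, z) ≠ col s(x, z) ∧
      col s(x, y) ≠ col s(x, z) := by
  have hcol' : ∀ x y, r y x → col s(x, y) = φ y := fun x y h => Sym2.eq_swap ▸ hcol y x h
  rintro ⟨x, y, z, ⟨-, hxy | hyx⟩, ⟨-, hyz | hzy⟩, ⟨-, hxz | hzx⟩, d₁, d₂, d₃⟩
  -- each of the six orientations that is not a directed triangle has two edges with one tail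
  all_goals first
    | exact hcyc _ _ _ hxy hyz hzx
    | exact hcyc _ _ _ hxz hzy hyx
    | simp_all

lemma colourClass_eq_empty_or_ncard_eq [Finite V] (hr : ∀ x y, r x y → ¬ r y x)
    (col : Sym2 V → ℕ) {φ : V → ℕ} (hφ : φ.Injective)
    (hcol : ∀ x y, r x y → col s(x, y) = φ x) {k : ℕ}
    (hout : ∀ v, {w | r v w}.ncard = 0 ∨ {w | r v w}.ncard = k) (i : ℕ) :
    {e | e ∈ (fromRel r).edgeSet ∧ col e = i} = ∅ ∨
      {e | e ∈ (fromRel r).edgeSet ∧ col e = i}.ncard = k := by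
  by_cases hi : ∃ v, φ v = i
  · obtain ⟨v, rfl⟩ := hi
    have hclass :
        {e | e ∈ (fromRel r).edgeSet ∧ col e = φ v} = (fun w => s(v, w)) '' {w | r v w} := by
      ext e
      constructor
      · rintro ⟨he, hce⟩
        obtain ⟨x, y, hxy, rfl⟩ := exists_rel_of_mem_edgeSet_fromRel r he
        obtain rfl := hφ ((hcol x y hxy).symm.trans hce)
        exact ⟨y, hxy, rfl⟩
      · rintro ⟨w, hw, rfl⟩
        exact ⟨mem_edgeSet_fromRel_of_rel r hr hw, hcol v w hw⟩
    rw [hclass, Set.image_eq_empty, Set.ncard_image_of_injective _ fun _ _ => Sym2.congr_right.mp,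
      ← Set.ncard_eq_zero]
    exact hout v
  · left
    simp only [not_exists] at hi
    refine Set.eq_empty_of_forall_notMem fun e ⟨he, hce⟩ => ?_
    obtain ⟨x, y, hxy, rfl⟩ := exists_rel_of_mem_edgeSet_fromRel r he
    exact hi x ((hcol x y hxy).symm.trans hce)

end TailColouring

namespace ConedCirculant

variable (m k : ℕ)

/-- `some i` is the cycle vertex `v_i` and `none` is the apex `z`. -/
def arc : Option (ZMod m) → Option (ZMod m) → Prop
  | some _, none => True
  | some i, some j => 0 < (j - i).val ∧ (j - i).val < k
  | none, _ => False

variable {m k}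

lemma le_val_add_of_add_eq_zero [NeZero m] {a b c : ZMod m} (h : a + b + c = 0)
    (hpos : 0 < a.val + b.val + c.val) : m ≤ a.val + b.val + c.val := by
  refine Nat.le_of_dvd hpos ((ZMod.natCast_eq_zero_iff _ _).mp ?_)
  push_cast
  simpa only [ZMod.natCast_zmod_val] using h

lemma setOf_arc_none : {w | arc m k none w} = ∅ := Set.eq_empty_of_forall_notMem fun _ h => h

variable [NeZero m]

lemma arc_asymm (hkm : 2 * (k - 1) < m) {x y : Option (ZMod m)} :
    arc m k x y → ¬ arc m k y x := by
  match x, y with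
  | some i, some j =>
    rintro ⟨h₁, h₂⟩ ⟨h₃, h₄⟩
    have := le_val_add_of_add_eq_zero (a := j - i) (b := i - j) (c := 0) (by ring)
      (by omega)
    simp only [ZMod.val_zero] at this
    omega
  | some _, none => exact fun _ h => h
  | none, _ => exact fun h => h.elim

lemma not_arc_of_arc_of_arc (hkm : 3 * (k - 1) < m) {x y z : Option (ZMod m)} :
    arc m k x y → arc m k y z → ¬ arc m k z x := by
  match x, y, z with
  | some i, some j, some l =>
    rintro ⟨h₁, h₂⟩ ⟨h₃, h₄⟩ ⟨h₅, h₆⟩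
    have := le_val_add_of_add_eq_zero (a := j - i) (b := l - j) (c := i - l) (by ring)
      (by omega)
    omega
  | none, _, _ | _, none, _ | some _, some _, none => simp [arc]

lemma ncard_setOf_arc_some (hk : 0 < k) (hkm : k ≤ m) (i : ZMod m) :
    {w | arc m k (some i) w}.ncard = k := by
  have hcycle : {j : ZMod m | arc m k (some i) (some j)}.ncard = k - 1 := by
    rw [show k - 1 = (Set.Ioo 0 k).ncard by simp]
    refine Set.ncard_congr (fun j _ => (j - i).val) (fun j hj => hj) ?_ fun t ht => ?_
    · intro j j' _ _ h
      simpa using ZMod.val_injective m h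
    · have ht_val : ((t : ZMod m)).val = t := ZMod.val_natCast_of_lt (ht.2.trans_le hkm)
      refine ⟨i + t, ?_, ?_⟩
      · show 0 < (i + t - i).val ∧ (i + t - i).val < k
        rwa [add_sub_cancel_left, ht_val]
      · simp only [add_sub_cancel_left, ht_val]
  have hsplit :
      {w | arc m k (some i) w} = insert none (some '' {j | arc m k (some i) (some j)}) := by
    ext (_ | j) <;> simp [arc]
  rw [hsplit, Set.ncard_insert_of_notMem (by simp),
    Set.ncard_image_of_injective _ (Option.some_injective _), hcycle]
  omega

lemma sum_ncard_setOf_arc (hk : 0 < k) (hkm : k ≤ m) :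
    ∑ x, {w | arc m k x w}.ncard = m * k := by
  simp [Fintype.sum_option, setOf_arc_none, ncard_setOf_arc_some hk hkm, ZMod.card]

end ConedCirculant

open ConedCirculant in
/-- For every `k ≥ 2` and `n = 3k - 1` there is an edge-coloured graph on
`n` vertices with `3k² - 2k` edges, all (nonempty) colour classes of size exactly `k`, and
no rainbow triangle. -/
theorem stmt10 (k : ℕ) (hk : 2 ≤ k) :
    ∃ (G : SimpleGraph (Fin (3 * k - 1))) (col : Sym2 (Fin (3 * k - 1)) → ℕ),
      G.edgeSet.ncard = 3 * k ^ 2 - 2 * k ∧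
      (∀ i : ℕ, {e | e ∈ G.edgeSet ∧ col e = i} = ∅ ∨
        {e | e ∈ G.edgeSet ∧ col e = i}.ncard = k) ∧
      ¬ ∃ x y z : Fin (3 * k - 1), G.Adj x y ∧ G.Adj y z ∧ G.Adj x z ∧
        col s(x, y) ≠ col s(y, z) ∧ col s(y, z) ≠ col s(x, z) ∧ col s(x, y) ≠ col s(x, z) := by
  have : NeZero (3 * k - 2) := ⟨by omega⟩
  let e : Fin (3 * k - 1) ≃ Option (ZMod (3 * k - 2)) :=
    Fintype.equivOfCardEq (by simp [ZMod.card]; omega)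
  let r x y := arc (3 * k - 2) k (e x) (e y)
  have hr : ∀ x y, r x y → ¬ r y x := fun _ _ => arc_asymm (by omega)
  have hdeg (v) : {w | r v w}.ncard = {w | arc (3 * k - 2) k (e v) w}.ncard :=
    Set.ncard_preimage_of_injective_subset_range (s := {w | arc (3 * k - 2) k (e v) w})
      e.injective (by simp)
  obtain ⟨col, hcol⟩ := exists_tail_colouring r hr Fin.val
  refine ⟨fromRel r, col, ?_, colourClass_eq_empty_or_ncard_eq r hr col Fin.val_injective hcol ?_,
    not_exists_rainbow_triangle_fromRel r col Fin.val hcol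
      fun _ _ _ => not_arc_of_arc_of_arc (by omega)⟩
  · rw [ncard_edgeSet_fromRel r hr, ncard_setOf_rel_eq_sum,
      Finset.sum_congr rfl fun v _ => hdeg v,
      e.sum_comp fun x => {w | arc (3 * k - 2) k x w}.ncard,
      sum_ncard_setOf_arc (by omega) (by omega), Nat.sub_mul, sq, mul_assoc]
  · intro v
    rw [hdeg]
    cases e v
    · simp [setOf_arc_none]
    · exact Or.inr (ncard_setOf_arc_some (by omega) (by omega) _)
end

section
/- Let k ≥ 1 and a,b ≥ 1 and consider the graph H^k_{a,b} obtained from the complete bipartite graph with sides A (|A|=a) and B (|B|=b) by partitioning B into ⌈b/k⌉ blocks, all of size k except possibly one smaller block, and adding a complete graph on each block. Then there is an edge-colouring of H^k_{a,b} with all colour classes of size at most k and no rainbow triangle. -/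
def Hgraph (k a b : ℕ) : SimpleGraph (Fin a ⊕ Fin b) :=
  SimpleGraph.fromRel (fun x y =>
    match x, y with
    | Sum.inl _, Sum.inr _ => True
    | Sum.inr i, Sum.inr j => (i : ℕ) / k = (j : ℕ) / k
    | _, _ => False)

/-- The colour of an (ordered) edge. -/
def colF (k : ℕ) {a b : ℕ} : (Fin a ⊕ Fin b) → (Fin a ⊕ Fin b) → ℕ
  | Sum.inl v, Sum.inr i => 2 * Nat.pair v ((i : ℕ) / k)
  | Sum.inr i, Sum.inl v => 2 * Nat.pair v ((i : ℕ) / k)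
  | Sum.inr i, Sum.inr j => 2 * (min (i : ℕ) (j : ℕ)) + 1
  | _, _ => 0

lemma colF_symm (k : ℕ) {a b : ℕ} (x y : Fin a ⊕ Fin b) : colF k x y = colF k y x := by
  rcases x with v | i <;> rcases y with w | j <;> simp [colF, min_comm]

/-- Injection used to bound each colour class. -/
def gF (k : ℕ) {a b : ℕ} : (Fin a ⊕ Fin b) → (Fin a ⊕ Fin b) → ℕ
  | Sum.inl _, Sum.inr i => (i : ℕ) % k
  | Sum.inr i, Sum.inl _ => (i : ℕ) % k
  | Sum.inr i, Sum.inr j => (max (i : ℕ) (j : ℕ)) % k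
  | _, _ => 0

lemma gF_symm (k : ℕ) {a b : ℕ} (x y : Fin a ⊕ Fin b) : gF k x y = gF k y x := by
  rcases x with v | i <;> rcases y with w | j <;> simp [gF, max_comm]

lemma nat_eq_of_div_mod (k : ℕ) {x y : ℕ} (h1 : x / k = y / k) (h2 : x % k = y % k) :
    x = y := by
  calc x = k * (x / k) + x % k := (Nat.div_add_mod x k).symm
    _ = k * (y / k) + y % k := by rw [h1, h2]
    _ = y := Nat.div_add_mod y k

/-- For `k, a, b ≥ 1`, the graph `H^k_{a,b}` admits an edge-colouring
with all colour classes of size at most `k` and no rainbow triangle. -/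
theorem stmt11 (k a b : ℕ) (hk : 1 ≤ k) (ha : 1 ≤ a) (hb : 1 ≤ b) :
    ∃ col : Sym2 (Fin a ⊕ Fin b) → ℕ,
      (∀ i : ℕ, {e | e ∈ (Hgraph k a b).edgeSet ∧ col e = i}.ncard ≤ k) ∧
      ¬ ∃ x y z : Fin a ⊕ Fin b,
        (Hgraph k a b).Adj x y ∧ (Hgraph k a b).Adj y z ∧ (Hgraph k a b).Adj x z ∧
        col s(x, y) ≠ col s(y, z) ∧ col s(y, z) ≠ col s(x, z) ∧ col s(x, y) ≠ col s(x, z) := by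
  classical
  refine ⟨Sym2.lift ⟨colF k, colF_symm k⟩, ?_, ?_⟩
  · intro c
    set S : Set (Sym2 (Fin a ⊕ Fin b)) :=
      {e | e ∈ (Hgraph k a b).edgeSet ∧ Sym2.lift ⟨colF k, colF_symm k⟩ e = c} with hS
    have key : S.ncard ≤ (↑(Finset.range k) : Set ℕ).ncard := by
      apply Set.ncard_le_ncard_of_injOn (Sym2.lift ⟨gF k, gF_symm k⟩)
      · rintro e ⟨he, hce⟩
        induction e using Sym2.ind with
        | _ x y =>
          rw [SimpleGraph.mem_edgeSet] at he
          simp only [Finset.coe_range, Set.mem_Iio]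
          rcases x with v | i <;> rcases y with w | j <;> simp [Hgraph] at he <;>
            simp [gF] <;> exact Nat.mod_lt _ hk
      · rintro e ⟨he, hce⟩ e' ⟨he', hce'⟩ hg
        induction e using Sym2.ind with
        | _ x y =>
        induction e' using Sym2.ind with
        | _ x' y' =>
          rw [SimpleGraph.mem_edgeSet] at he he'
          rw [← hce'] at hce
          simp only [Sym2.lift_mk] at hce hg
          rcases x with v | i <;> rcases y with w | j <;>
            rcases x' with v' | i' <;> rcases y' with w' | j' <;>
            simp [Hgraph] at he he' <;>
            simp only [colF, gF] at hce hg
          · obtain ⟨hv, hdiv⟩ := Nat.pair_eq_pair.mp (by omega : Nat.pair (v:ℕ) ((j:ℕ)/k) = Nat.pair (v':ℕ) ((j':ℕ)/k))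
            rw [Fin.val_inj.mp hv, Fin.val_inj.mp (nat_eq_of_div_mod k hdiv hg)]
          · obtain ⟨hv, hdiv⟩ := Nat.pair_eq_pair.mp (by omega : Nat.pair (v:ℕ) ((j:ℕ)/k) = Nat.pair (w':ℕ) ((i':ℕ)/k))
            rw [Fin.val_inj.mp hv, Fin.val_inj.mp (nat_eq_of_div_mod k hdiv hg), Sym2.eq_swap]
          · exact absurd hce (by omega)
          · obtain ⟨hv, hdiv⟩ := Nat.pair_eq_pair.mp (by omega : Nat.pair (w:ℕ) ((i:ℕ)/k) = Nat.pair (v':ℕ) ((j':ℕ)/k))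
            rw [Fin.val_inj.mp hv, Fin.val_inj.mp (nat_eq_of_div_mod k hdiv hg), Sym2.eq_swap]
          · obtain ⟨hv, hdiv⟩ := Nat.pair_eq_pair.mp (by omega : Nat.pair (w:ℕ) ((i:ℕ)/k) = Nat.pair (w':ℕ) ((i':ℕ)/k))
            rw [Fin.val_inj.mp hv, Fin.val_inj.mp (nat_eq_of_div_mod k hdiv hg)]
          · exact absurd hce (by omega)
          · exact absurd hce (by omega)
          · exact absurd hce (by omega)
          · have hij : (i:ℕ)/k = (j:ℕ)/k := by rcases he.2 with h | h; exacts [h, h.symm]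
            have hij' : (i':ℕ)/k = (j':ℕ)/k := by rcases he'.2 with h | h; exacts [h, h.symm]
            have hmin : min (i:ℕ) (j:ℕ) = min (i':ℕ) (j':ℕ) := by omega
            have e1 : (max (i:ℕ) (j:ℕ))/k = (min (i:ℕ) (j:ℕ))/k := by
              rcases le_total (i:ℕ) (j:ℕ) with h | h
              · rw [max_eq_right h, min_eq_left h, hij]
              · rw [max_eq_left h, min_eq_right h, hij]
            have e2 : (max (i':ℕ) (j':ℕ))/k = (min (i':ℕ) (j':ℕ))/k := by
              rcases le_total (i':ℕ) (j':ℕ) with h | h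
              · rw [max_eq_right h, min_eq_left h, hij']
              · rw [max_eq_left h, min_eq_right h, hij']
            have hmaxdiv : (max (i:ℕ) (j:ℕ))/k = (max (i':ℕ) (j':ℕ))/k := by
              rw [e1, e2, hmin]
            have hmax : max (i:ℕ) (j:ℕ) = max (i':ℕ) (j':ℕ) :=
              nat_eq_of_div_mod k hmaxdiv hg
            have hcase : ((i:ℕ) = i' ∧ (j:ℕ) = j') ∨ ((i:ℕ) = j' ∧ (j:ℕ) = i') := by omega
            rcases hcase with ⟨h1, h2⟩ | ⟨h1, h2⟩
            · rw [Fin.val_inj.mp h1, Fin.val_inj.mp h2]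
            · rw [Fin.val_inj.mp h1, Fin.val_inj.mp h2, Sym2.eq_swap]
    rwa [Set.ncard_coe_finset, Finset.card_range] at key
  · rintro ⟨x, y, z, hxy, hyz, hxz, h1, h2, h3⟩
    rcases x with v | i <;> rcases y with w | j <;> rcases z with u | l <;>
      simp [Hgraph] at hxy hyz hxz <;>
      simp only [Sym2.lift_mk, colF] at h1 h2 h3
    · refine h3 ?_
      obtain h | h := hyz.2 <;> rw [h]
    · refine h1 ?_
      obtain h | h := hxz.2 <;> rw [h]
    · refine h2 ?_
      obtain h | h := hxy.2 <;> rw [h]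
    · omega
end

section
/- Let D be a finite simple digraph on n vertices with minimum out-degree at least n/r, and suppose that every edge-coloured graph on n vertices with n colour classes each of size at least n/r contains a rainbow cycle of length at most r. Then D contains a directed cycle of length at most r. -/
/-!
Orient the underlying graph of a digraph `D` without digons and colour each edge by the tail of
its arc; then the colour class of `v` has as many edges as `v` has out-neighbours. In a rainbow
cycle the tails of the edges are distinct vertices of the cycle, and once one edge points
backwards along the cycle the next one has to as well, since its other endpoint is already used
as a tail. Hence a rainbow cycle is a directed cycle. A digon is a directed cycle of length `2`,
and `r ≥ 2` since out-degrees are smaller than `n`.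
-/

open SimpleGraph

section Orientation

variable {V : Type*} {G : SimpleGraph V} {D : V → V → Prop} {g : Sym2 V → V}

def IsTailMap (G : SimpleGraph V) (D : V → V → Prop) (g : Sym2 V → V) : Prop :=
  ∀ ⦃a b⦄, G.Adj a b → g s(a, b) = a ∧ D a b ∨ g s(a, b) = b ∧ D b a

theorem isChain_flip_support_of_nodup_cons_tails (hg : IsTailMap G D g) :
    ∀ {c b : V} (p : G.Walk c b), (c :: p.edges.map g).Nodup → p.support.IsChain (flip D)
  | _, _, .nil, _ => List.isChain_singleton _
  | c, _, .cons (v := d) h p, hnd => by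
    rw [Walk.edges_cons, List.map_cons, List.nodup_cons, List.mem_cons, not_or] at hnd
    have hback : g s(c, d) = d ∧ D d c := (hg h).resolve_left fun hc => hnd.1.1 hc.1.symm
    rw [Walk.support_cons, ← p.cons_tail_support, List.isChain_cons_cons, p.cons_tail_support]
    rw [hback.1] at hnd
    exact ⟨hback.2, isChain_flip_support_of_nodup_cons_tails hg p hnd.2⟩

theorem isChain_support_of_nodup_cons_tails
    (hg : IsTailMap G D g)
    {a b : V} (w : G.Walk a b) (hnd : (b :: w.edges.map g).Nodup) : w.support.IsChain D := by
  have hrev := isChain_flip_support_of_nodup_cons_tails hg w.reverse <| by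
    rwa [Walk.edges_reverse, List.map_reverse, ((List.reverse_perm _).cons b).nodup_iff]
  rwa [Walk.support_reverse, List.isChain_reverse] at hrev

theorem exists_directed_cycle_of_nodup_tails
    (hg : IsTailMap G D g)
    {v : V} (w : G.Walk v v) (hw : w.IsCycle) (hnd : (w.edges.map g).Nodup) :
    ∃ (l : List V) (hne : l ≠ []), l.length = w.length ∧ l.Nodup ∧ l.IsChain D ∧
      D (l.getLast hne) (l.head hne) := by
  cases w with
  | nil => exact absurd rfl hw.ne_nil
  | cons h p =>
    have hsupp : p.support.Nodup := by simpa using hw.support_nodup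
    rw [Walk.edges_cons, List.map_cons] at hnd
    rcases hg h with ⟨hfst, hvc⟩ | ⟨hsnd, hcv⟩
    · refine ⟨p.support, p.support_ne_nil, by simp, hsupp,
        isChain_support_of_nodup_cons_tails hg p (by rwa [hfst] at hnd), ?_⟩
      rwa [Walk.getLast_support, Walk.head_support]
    · refine ⟨p.support.reverse, by simp, by simp, List.nodup_reverse.mpr hsupp,
        List.isChain_reverse.mpr <|
          isChain_flip_support_of_nodup_cons_tails hg p (by rwa [hsnd] at hnd), ?_⟩
      rwa [List.getLast_reverse, List.head_reverse, Walk.getLast_support, Walk.head_support]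

end Orientation

section ArcTail

variable {V : Type*} (D : V → V → Prop) [DecidableRel D]

/-- The tail of the arc of `D` joining the endpoints of `e`; junk unless `D` has exactly one arc
between them. -/
noncomputable def arcTail (e : Sym2 V) : V :=
  if D e.out.1 e.out.2 then e.out.1 else e.out.2

variable {D}

theorem arcTail_eq_of_rel (hD : ∀ a b, D a b → ¬D b a) {a b : V} (h : D a b) :
    arcTail D s(a, b) = a := by
  have hout : s((s(a, b)).out.1, (s(a, b)).out.2) = s(a, b) := Quot.out_eq _
  unfold arcTail
  rcases Sym2.eq_iff.mp hout with ⟨h1, h2⟩ | ⟨h1, h2⟩ <;> simp [h1, h2, h, hD a b h]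

theorem isTailMap_arcTail (hD : ∀ a b, D a b → ¬D b a) :
    IsTailMap (fromRel D) D (arcTail D) := by
  intro a b hab
  rcases (fromRel_adj D a b).mp hab |>.2 with h | h
  · exact .inl ⟨arcTail_eq_of_rel hD h, h⟩
  · exact .inr ⟨Sym2.eq_swap ▸ arcTail_eq_of_rel hD h, h⟩

theorem card_filter_rel_le_ncard_arcTail_eq [Fintype V] (hD : ∀ a b, D a b → ¬D b a) (v : V) :
    (Finset.univ.filter (D v ·)).card ≤
      {e | e ∈ (fromRel D).edgeSet ∧ arcTail D e = v}.ncard := by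
  rw [← Set.ncard_coe_finset]
  refine Set.ncard_le_ncard_of_injOn (fun u => s(v, u)) ?_
    (fun _ _ _ _ h => Sym2.congr_right.mp h) (Set.toFinite _)
  intro u hu
  simp only [Finset.coe_filter, Finset.mem_univ, true_and, Set.mem_ofPred_eq] at hu
  exact ⟨(fromRel_adj D v u).mpr ⟨fun h => hD v v (h ▸ hu) (h ▸ hu), .inl hu⟩,
    arcTail_eq_of_rel hD hu⟩

end ArcTail

theorem card_filter_rel_lt_card {V : Type*} [Fintype V] {D : V → V → Prop} [DecidableRel D]
    {v : V} (hv : ¬D v v) : (Finset.univ.filter (D v ·)).card < Fintype.card V :=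
  Finset.card_lt_univ_of_notMem (x := v) (by simpa using hv)

theorem stmt12_general {V : Type*} [Fintype V] (n r : ℕ)
    (hn : n = Fintype.card V)
    (D : V → V → Prop) [DecidableRel D] (hirr : Irreflexive D)
    (hdeg : ∀ v : V, n ≤ r * (Finset.univ.filter (fun u => D v u)).card)
    (hCH : ∀ (G : SimpleGraph V) (col : Sym2 V → Fin n),
      (∀ i : Fin n, n ≤ r * {e | e ∈ G.edgeSet ∧ col e = i}.ncard) →
      ∃ (v : V) (w : G.Walk v v), w.IsCycle ∧ w.length ≤ r ∧ (w.edges.map col).Nodup) :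
    ∃ (l : List V) (hne : l ≠ []), l.length ≤ r ∧ l.Nodup ∧ l.Chain' D ∧
      D (l.getLast hne) (l.head hne) := by
  by_cases hdigon : ∃ u v, D u v ∧ D v u
  · obtain ⟨u, v, huv, hvu⟩ := hdigon
    have hr : 2 ≤ r := by
      have := hdeg u
      have := card_filter_rel_lt_card (hirr u)
      by_contra!
      nlinarith
    exact ⟨[u, v], by simp, by simpa, by simpa using fun h : u = v => hirr u (h ▸ huv),
      List.isChain_pair.mpr huv, hvu⟩
  push Not at hdigon
  let ι : V ≃ Fin n := Fintype.equivFinOfCardEq hn.symm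
  obtain ⟨v, w, hcyc, hlen, hrainbow⟩ := hCH (fromRel D) (ι ∘ arcTail D) fun i => by
    calc n ≤ r * (Finset.univ.filter (D (ι.symm i) ·)).card := hdeg _
      _ ≤ r * _ := Nat.mul_le_mul_left r (card_filter_rel_le_ncard_arcTail_eq hdigon _)
      _ = _ := by simp only [Function.comp_apply, ι.eq_symm_apply]
  rw [← List.map_map] at hrainbow
  obtain ⟨l, hne, hl, hlnd, hchain, hclose⟩ :=
    exists_directed_cycle_of_nodup_tails (isTailMap_arcTail hdigon) w hcyc (hrainbow.of_map ι)
  exact ⟨l, hne, hl ▸ hlen, hlnd, hchain, hclose⟩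

/-- If every edge-coloured graph on `n` vertices with `n` colour classes,
each of size at least `n/r`, contains a rainbow cycle of length at most `r`, then every
simple digraph on `n` vertices with minimum out-degree at least `n/r` contains a directed
cycle of length at most `r`. -/
theorem stmt12 {V : Type*} [Fintype V] [DecidableEq V] (n r : ℕ)
    (hn : n = Fintype.card V) (hr : 1 ≤ r)
    (D : V → V → Prop) [DecidableRel D] (hirr : Irreflexive D)
    (hdeg : ∀ v : V, n ≤ r * (Finset.univ.filter (fun u => D v u)).card)
    (hCH : ∀ (G : SimpleGraph V) (col : Sym2 V → Fin n),
      (∀ i : Fin n, n ≤ r * {e | e ∈ G.edgeSet ∧ col e = i}.ncard) →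
      ∃ (v : V) (w : G.Walk v v), w.IsCycle ∧ w.length ≤ r ∧ (w.edges.map col).Nodup) :
    ∃ (l : List V) (hne : l ≠ []), l.length ≤ r ∧ l.Nodup ∧ l.Chain' D ∧
      D (l.getLast hne) (l.head hne) :=
  stmt12_general n r hn D hirr hdeg hCH
end

section
/- Let n' ≤ n and suppose a graph G on n vertices is reduced to a graph on a vertex set U of size n' by successively deleting, at each step with i vertices remaining, a vertex of degree less than ⌊i/2⌋ (for i from n down to n'+1). Then the number of edges of G satisfies m ≤ (1/2)(C(n,2) + C(n',2)), where C(a,2) denotes the binomial coefficient a choose 2. -/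
/-- Suppose a graph `G` on `n` vertices is reduced to a vertex set `U` of
size `n'` by successively deleting, at each step with `i` vertices remaining, a vertex
`x i` of degree less than `⌊i/2⌋` in the current graph (for `i` from `n` down to `n'+1`).
Then `m ≤ (1/2)(C(n,2) + C(n',2))`, i.e. `2m ≤ C(n,2) + C(n',2)`. -/
theorem stmt17 {V : Type*} [Fintype V] [DecidableEq V] (G : SimpleGraph V)
    [DecidableRel G.Adj] (n n' m : ℕ) (hn : n = Fintype.card V)
    (hm : m = G.edgeFinset.card) (hle : n' ≤ n)
    (U : Finset V) (hU : U.card = n') (x : ℕ → V)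
    (hcover : U ∪ (Finset.Ioc n' n).image x = Finset.univ)
    (hdisj : ∀ i ∈ Finset.Ioc n' n, x i ∉ U)
    (hinj : Set.InjOn x (Set.Ioc n' n))
    (hdeg : ∀ i ∈ Finset.Ioc n' n,
      (((U ∪ (Finset.Ioc n' i).image x).filter (fun w => G.Adj (x i) w)).card) < i / 2) :
    2 * m ≤ n.choose 2 + n'.choose 2 := by
  classical
  set I := Finset.Ioc n' n with hI
  set S : ℕ → Finset V := fun i => U ∪ (Finset.Ioc n' i).image x with hS
  set B : ℕ → Finset (Sym2 V) := fun i =>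
    ((S i).filter (fun w => G.Adj (x i) w)).image (fun w => s(x i, w)) with hB
  set D : Finset (Sym2 V) := U.sym2.filter (fun e => ¬ e.IsDiag) with hD
  -- helper: every vertex is in U or of the form x i
  have hmem : ∀ v : V, v ∈ U ∨ ∃ i ∈ Finset.Ioc n' n, v = x i := by
    intro v
    have : v ∈ U ∪ (Finset.Ioc n' n).image x := by rw [hcover]; exact Finset.mem_univ v
    rcases Finset.mem_union.mp this with h | h
    · exact Or.inl h
    · right; obtain ⟨i, hi, hxi⟩ := Finset.mem_image.mp h; exact ⟨i, hi, hxi.symm⟩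
  -- helper to land in B i
  have hBmem : ∀ i ∈ Finset.Ioc n' n, ∀ w, G.Adj (x i) w → w ∈ S i → s(x i, w) ∈ B i := by
    intro i _ w hadj hw
    exact Finset.mem_image.mpr ⟨w, Finset.mem_filter.mpr ⟨hw, hadj⟩, rfl⟩
  -- subset claim
  have hsub : G.edgeFinset ⊆ D ∪ I.biUnion B := by
    intro e he
    induction e using Sym2.ind with
    | _ a b =>
      rw [SimpleGraph.mem_edgeFinset, SimpleGraph.mem_edgeSet] at he
      have hab : a ≠ b := he.ne
      rcases hmem a with ha | ⟨i, hi, ha⟩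
      · rcases hmem b with hb | ⟨j, hj, hb⟩
        · -- both in U
          refine Finset.mem_union_left _ (Finset.mem_filter.mpr ⟨?_, ?_⟩)
          · rw [Finset.mk_mem_sym2_iff]; exact ⟨ha, hb⟩
          · simpa using hab
        · -- a ∈ U, b = x j
          refine Finset.mem_union_right _ (Finset.mem_biUnion.mpr ⟨j, hj, ?_⟩)
          have : s(a, b) = s(x j, a) := by rw [hb, Sym2.eq_swap]
          rw [this]
          exact hBmem j hj a (hb ▸ he.symm) (Finset.mem_union_left _ ha)
      · rcases hmem b with hb | ⟨j, hj, hb⟩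
        · -- b ∈ U, a = x i
          refine Finset.mem_union_right _ (Finset.mem_biUnion.mpr ⟨i, hi, ?_⟩)
          have : s(a, b) = s(x i, b) := by rw [ha]
          rw [this]
          exact hBmem i hi b (ha ▸ he) (Finset.mem_union_left _ hb)
        · -- a = x i, b = x j
          have hij : i ≠ j := by
            intro h; apply hab; rw [ha, hb, h]
          rcases hij.lt_or_gt with hlt | hlt
          · -- i < j : charge to j
            refine Finset.mem_union_right _ (Finset.mem_biUnion.mpr ⟨j, hj, ?_⟩)
            have hrw : s(a, b) = s(x j, a) := by rw [hb, Sym2.eq_swap]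
            rw [hrw]
            refine hBmem j hj a (hb ▸ he.symm) (Finset.mem_union_right _ ?_)
            refine Finset.mem_image.mpr ⟨i, ?_, ha.symm⟩
            simp only [Finset.mem_Ioc] at hi ⊢
            exact ⟨hi.1, hlt.le⟩
          · -- j < i : charge to i
            refine Finset.mem_union_right _ (Finset.mem_biUnion.mpr ⟨i, hi, ?_⟩)
            have hrw : s(a, b) = s(x i, b) := by rw [ha]
            rw [hrw]
            refine hBmem i hi b (ha ▸ he) (Finset.mem_union_right _ ?_)
            refine Finset.mem_image.mpr ⟨j, ?_, hb.symm⟩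
            simp only [Finset.mem_Ioc] at hj ⊢
            exact ⟨hj.1, hlt.le⟩
  -- card of D
  have hDcard : D.card = n'.choose 2 := by
    have hfd : U.sym2.filter (fun e => e.IsDiag) = U.image Sym2.diag := by
      ext e
      induction e using Sym2.ind with
      | _ a b =>
        simp only [Finset.mem_filter, Finset.mk_mem_sym2_iff, Finset.mem_image, Sym2.diag,
          Sym2.isDiag_iff_proj_eq, Sym2.eq_iff]
        constructor
        · rintro ⟨⟨ha, hb⟩, hd⟩
          exact ⟨a, ha, Or.inl ⟨rfl, hd⟩⟩
        · rintro ⟨c, hc, (⟨h1, h2⟩ | ⟨h1, h2⟩)⟩ <;> subst h1 <;> subst h2 <;> exact ⟨⟨hc, hc⟩, rfl⟩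
    have h1 : (U.sym2.filter (fun e => e.IsDiag)).card = n' := by
      rw [hfd, Finset.card_image_of_injective _ Sym2.diag_injective, hU]
    have h2 : (U.sym2.filter (fun e => e.IsDiag)).card + D.card = U.sym2.card :=
      Finset.card_filter_add_card_filter_not _
    rw [Finset.card_sym2, hU, h1] at h2
    have h3 : (n' + 1).choose 2 = n' + n'.choose 2 := by
      rw [Nat.choose_succ_succ, Nat.choose_one_right]
    omega
  -- card bound for B i
  have hBcard : ∀ i ∈ I, 2 * (B i).card ≤ i - 1 := by
    intro i hi
    have h1 : (B i).card ≤ ((S i).filter (fun w => G.Adj (x i) w)).card :=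
      Finset.card_image_le
    have h2 := hdeg i hi
    simp only [hS] at h1
    omega
  -- main count
  have hcount : m ≤ D.card + ∑ i ∈ I, (B i).card := by
    calc m = G.edgeFinset.card := hm
    _ ≤ (D ∪ I.biUnion B).card := Finset.card_le_card hsub
    _ ≤ D.card + (I.biUnion B).card := Finset.card_union_le _ _
    _ ≤ D.card + ∑ i ∈ I, (B i).card := by
        exact Nat.add_le_add_left (Finset.card_biUnion_le) _
  -- sum bound
  have hsum : 2 * ∑ i ∈ I, (B i).card ≤ ∑ i ∈ I, (i - 1) := by
    rw [Finset.mul_sum]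
    exact Finset.sum_le_sum hBcard
  -- arithmetic identity
  have hid : n'.choose 2 + ∑ i ∈ Finset.Ioc n' n, (i - 1) = n.choose 2 := by
    clear * - hle
    induction n, hle using Nat.le_induction with
    | base => simp
    | succ k hk ih =>
      have hc : (k + 1).choose 2 = k.choose 2 + k := by
        simp [Nat.choose_succ_succ, Nat.choose_one_right, Nat.add_comm]
      rw [Finset.sum_Ioc_succ_top (by omega : n' ≤ k), ← Nat.add_assoc, ih, hc]
      omega
  calc 2 * m ≤ 2 * D.card + 2 * ∑ i ∈ I, (B i).card := by omega
  _ ≤ 2 * n'.choose 2 + ∑ i ∈ I, (i - 1) := by rw [hDcard]; omega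
  _ = n'.choose 2 + (n'.choose 2 + ∑ i ∈ Finset.Ioc n' n, (i - 1)) := by rw [hI]; ring
  _ = n'.choose 2 + n.choose 2 := by rw [hid]
  _ = n.choose 2 + n'.choose 2 := Nat.add_comm _ _
end

section
/- Let G be a graph on n vertices with a vertex partition {X,Y} such that every component of G[X] and of G[Y] has at most k vertices, where k ≥ 1. If m denotes the number of edges of G, then m ≤ n²/4 + (a_X + a_Y)n/4 + (k-1)²/16, where a_X and a_Y are the average degrees of G[X] and G[Y] respectively. -/
/-!
A vertex of `G[X]` together with its neighbours lies in its component, so every degree in `G[X]`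
is below `k` and `0 ≤ a_X ≤ k - 1`; likewise for `Y`. Each edge lies inside `X`, inside `Y`, or
joins `X` to `Y`, so `m ≤ a_X |X| / 2 + a_Y |Y| / 2 + |X| |Y|`. Completing the square in
`|X| - |Y|` turns this into the claimed bound, the error term being controlled by
`|a_X - a_Y| ≤ k - 1`.
-/

open Finset

namespace SimpleGraph

section SmallComponents

variable {W : Type*} [Fintype W] (H : SimpleGraph W) [DecidableRel H.Adj]

lemma degree_add_one_le_ncard_reachable (v : W) :
    H.degree v + 1 ≤ {w | H.Reachable v w}.ncard := by
  classical
  have hsub : (↑(insert v (H.neighborFinset v)) : Set W) ⊆ {w | H.Reachable v w} := by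
    intro w hw
    rcases mem_insert.mp hw with rfl | hadj
    · exact Reachable.refl _
    · exact ((H.mem_neighborFinset _ _).mp hadj).reachable
  calc H.degree v + 1 = #(insert v (H.neighborFinset v)) := by
        rw [card_insert_of_notMem (H.notMem_neighborFinset_self v), card_neighborFinset_eq_degree]
    _ = (↑(insert v (H.neighborFinset v)) : Set W).ncard := (Set.ncard_coe_finset _).symm
    _ ≤ _ := Set.ncard_le_ncard hsub

lemma two_mul_card_edgeFinset_add_card_le_s18 {k : ℕ}
    (hk : ∀ v, {w | H.Reachable v w}.ncard ≤ k) :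
    2 * #H.edgeFinset + Fintype.card W ≤ k * Fintype.card W :=
  calc 2 * #H.edgeFinset + Fintype.card W = ∑ v, (H.degree v + 1) := by
        rw [sum_add_distrib, sum_degrees_eq_twice_card_edges, sum_const, card_univ, smul_eq_mul,
          mul_one]
    _ ≤ ∑ _v : W, k := sum_le_sum fun v _ => (H.degree_add_one_le_ncard_reachable v).trans (hk v)
    _ = k * Fintype.card W := by rw [sum_const, card_univ, smul_eq_mul, mul_comm]

end SmallComponents

variable {V : Type*} [Fintype V] [DecidableEq V] (G : SimpleGraph V) [DecidableRel G.Adj]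

lemma card_filter_edgeFinset_forall_mem (s : Finset V) :
    #{e ∈ G.edgeFinset | ∀ v ∈ e, v ∈ s} = #(G.induce (s : Set V)).edgeFinset := by
  rw [← card_filter_edgeFinset_toFinset_subset]
  simp only [subset_iff, Sym2.mem_toFinset]

lemma two_mul_card_filter_edgeFinset_add_card_le {k : ℕ} (s : Finset V)
    (hs : ∀ x : ↥(s : Set V), {y | (G.induce (s : Set V)).Reachable x y}.ncard ≤ k) :
    2 * #{e ∈ G.edgeFinset | ∀ v ∈ e, v ∈ s} + #s ≤ k * #s := by
  have := (G.induce (s : Set V)).two_mul_card_edgeFinset_add_card_le_s18 hs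
  rwa [← card_filter_edgeFinset_forall_mem, ← Set.toFinset_card, Finset.toFinset_coe] at this

lemma card_edgeFinset_le_of_union_eq_univ {X Y : Finset V} (hcover : X ∪ Y = univ) :
    #G.edgeFinset ≤
      #{e ∈ G.edgeFinset | ∀ v ∈ e, v ∈ X} + #{e ∈ G.edgeFinset | ∀ v ∈ e, v ∈ Y} + #X * #Y := by
  have hsub : G.edgeFinset ⊆ {e ∈ G.edgeFinset | ∀ v ∈ e, v ∈ X} ∪
      {e ∈ G.edgeFinset | ∀ v ∈ e, v ∈ Y} ∪ (X ×ˢ Y).image fun p => s(p.1, p.2) := by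
    intro e he
    induction e using Sym2.ind with
    | _ a b =>
      have hmem : ∀ v, v ∈ X ∨ v ∈ Y := fun v => mem_union.mp (hcover ▸ mem_univ v)
      rcases hmem a with ha | ha <;> rcases hmem b with hb | hb <;> aesop
  calc #G.edgeFinset ≤ _ := card_le_card hsub
    _ ≤ _ := (card_union_le _ _).trans <|
      add_le_add (card_union_le _ _) (card_image_le.trans (card_product X Y).le)

end SimpleGraph

lemma two_mul_div_mul_cancel_of_two_mul_add_le {e s k : ℕ} (h : 2 * e + s ≤ k * s) :
    (2 * e / s : ℝ) * s = 2 * e := by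
  rcases Nat.eq_zero_or_pos s with rfl | hs
  · have : e = 0 := by omega
    simp [this]
  · exact div_mul_cancel₀ _ (by positivity)

lemma two_mul_div_le_sub_one_of_two_mul_add_le {e s k : ℕ} (hk : 1 ≤ k)
    (h : 2 * e + s ≤ k * s) : (2 * e / s : ℝ) ≤ k - 1 := by
  rcases Nat.eq_zero_or_pos s with rfl | hs
  · simpa using hk
  · rw [div_le_iff₀ (by positivity)]
    have : (2 * e + s : ℝ) ≤ k * s := by exact_mod_cast h
    linarith

lemma le_sq_div_four_add_of_le_mul_add {m x y a b c : ℝ} (hab : |a - b| ≤ c)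
    (hm : m ≤ a * x / 2 + b * y / 2 + x * y) :
    m ≤ (x + y) ^ 2 / 4 + (a + b) * (x + y) / 4 + c ^ 2 / 16 := by
  -- the bound minus `a x / 2 + b y / 2 + x y` is `((2 (x - y) - (a - b))² + c² - (a - b)²) / 16`
  have hsq : (a - b) ^ 2 ≤ c ^ 2 := sq_le_sq' (abs_le.mp hab).1 (abs_le.mp hab).2
  nlinarith [sq_nonneg (2 * (x - y) - (a - b))]

/-- If `{X, Y}` partitions the vertices of `G` and every connected
component of `G[X]` and of `G[Y]` has at most `k` vertices, then
`m ≤ n²/4 + (a_X + a_Y)n/4 + (k-1)²/16`, where `a_X, a_Y` are the average degrees of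
`G[X]` and `G[Y]`. -/
theorem stmt18 {V : Type*} [Fintype V] [DecidableEq V] (G : SimpleGraph V)
    [DecidableRel G.Adj] (k n m : ℕ) (hk : 1 ≤ k)
    (hn : n = Fintype.card V) (hm : m = G.edgeFinset.card)
    (X Y : Finset V) (hdisj : Disjoint X Y) (hcover : X ∪ Y = Finset.univ)
    (hX : ∀ x : ↥(X : Set V),
      {y : ↥(X : Set V) | (G.induce (X : Set V)).Reachable x y}.ncard ≤ k)
    (hY : ∀ y : ↥(Y : Set V),
      {z : ↥(Y : Set V) | (G.induce (Y : Set V)).Reachable y z}.ncard ≤ k)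
    (aX aY : ℝ)
    (haX : aX = 2 * ((G.edgeFinset.filter (fun e => ∀ v ∈ e, v ∈ X)).card : ℝ) / X.card)
    (haY : aY = 2 * ((G.edgeFinset.filter (fun e => ∀ v ∈ e, v ∈ Y)).card : ℝ) / Y.card) :
    (m : ℝ) ≤ (n : ℝ) ^ 2 / 4 + (aX + aY) * n / 4 + ((k : ℝ) - 1) ^ 2 / 16 := by
  have hdX := G.two_mul_card_filter_edgeFinset_add_card_le X hX
  have hdY := G.two_mul_card_filter_edgeFinset_add_card_le Y hY
  have hn' : (n : ℝ) = #X + #Y := by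
    rw [hn, ← card_univ, ← hcover, card_union_of_disjoint hdisj, Nat.cast_add]
  have hm' : (m : ℝ) ≤ aX * #X / 2 + aY * #Y / 2 + #X * #Y := by
    rw [haX, haY, two_mul_div_mul_cancel_of_two_mul_add_le hdX,
      two_mul_div_mul_cancel_of_two_mul_add_le hdY, hm]
    simpa using (Nat.cast_le (α := ℝ)).mpr (G.card_edgeFinset_le_of_union_eq_univ hcover)
  have hX0 : 0 ≤ aX := haX ▸ by positivity
  have hY0 : 0 ≤ aY := haY ▸ by positivity
  have hXk : aX ≤ k - 1 := haX ▸ two_mul_div_le_sub_one_of_two_mul_add_le hk hdX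
  have hYk : aY ≤ k - 1 := haY ▸ two_mul_div_le_sub_one_of_two_mul_add_le hk hdY
  rw [hn']
  exact le_sq_div_four_add_of_le_mul_add (abs_sub_le_iff.mpr ⟨by linarith, by linarith⟩) hm'
end
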